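/- arXiv:2203.03873 — 9 statements merged into one kernel-verified Lean document; each statement's English description precedes it below -/
import Mathlib

section
/- If A ⊆ ℤ has upper density strictly greater than 2/3, then A contains a translate of any given 3-element set S ⊆ ℤ; in particular d_f(S) ≤ 2/3 for every 3-element set S. -/
open Filter Set

/-- The translateSet `S + t` of a set of integers. -/
def translateSet (S : Set ℤ) (t : ℤ) : Set ℤ := (· + t) '' S

/-- Upper density of a set of integers. -/
noncomputable def upperDensity (A : Set ℤ) : ℝ :=
  Filter.limsup (fun n : ℕ => ((A ∩ Set.Icc (-(n : ℤ)) (n : ℤ)).ncard : ℝ) / (2 * n + 1)) Filter.atTop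

/-- Lower density of a set of integers. -/
noncomputable def lowerDensity (A : Set ℤ) : ℝ :=
  Filter.liminf (fun n : ℕ => ((A ∩ Set.Icc (-(n : ℤ)) (n : ℤ)).ncard : ℝ) / (2 * n + 1)) Filter.atTop

/-- `A` is `S`-covering: every integer lies in some translateSet `S + a`, `a ∈ A`. -/
def SCovering (S A : Set ℤ) : Prop := ∀ t : ℤ, ∃ a ∈ A, t ∈ translateSet S a

/-- `A` is `S`-blocking: `A` meets every translateSet of `S`. -/
def SBlocking (S A : Set ℤ) : Prop := ∀ t : ℤ, (A ∩ translateSet S t).Nonempty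

/-- `A` is `S`-free: `A` contains no translateSet of `S`. -/
def SFree (S A : Set ℤ) : Prop := ∀ t : ℤ, ¬ translateSet S t ⊆ A

/-- `A` is `S`-packing: distinct translates `S + a₁`, `S + a₂` with `a₁, a₂ ∈ A` are disjoint. -/
def SPacking (S A : Set ℤ) : Prop :=
  ∀ a₁ ∈ A, ∀ a₂ ∈ A, a₁ ≠ a₂ → Disjoint (translateSet S a₁) (translateSet S a₂)

/-- Maximum packing density of `S`. -/
noncomputable def dP (S : Set ℤ) : ℝ := sSup (upperDensity '' {A | SPacking S A})

/-- Minimum covering density of `S`. -/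
noncomputable def dC (S : Set ℤ) : ℝ := sInf (lowerDensity '' {A | SCovering S A})

/-- Minimum blocking density of `S`. -/
noncomputable def dB (S : Set ℤ) : ℝ := sInf (lowerDensity '' {A | SBlocking S A})

/-- `d_f(S)`: supremum of upper densities of `S`-free sets. -/
noncomputable def dF (S : Set ℤ) : ℝ := sSup (upperDensity '' {A | SFree S A})

/-- `d_f(S, -S)`: supremum of upper densities of sets free of translates of both `S` and `-S`. -/
noncomputable def dF2 (S : Set ℤ) : ℝ := sSup (upperDensity '' {A | SFree S A ∧ SFree (-S) A})

theorem key3 (S : Set ℤ) (hS : S.ncard = 3) (A : Set ℤ)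
    (hA : ∀ t : ℤ, ¬ translateSet S t ⊆ A) : upperDensity A ≤ 2 / 3 := by
  classical
  obtain ⟨a, b, c, hab, hac, hbc, rfl⟩ := Set.ncard_eq_three.mp hS
  set M : ℤ := max |a| (max |b| |c|) with hM
  have hMa : |a| ≤ M := le_max_left _ _
  have hMb : |b| ≤ M := le_trans (le_max_left _ _) (le_max_right _ _)
  have hMc : |c| ≤ M := le_trans (le_max_right _ _) (le_max_right _ _)
  have hM0 : 0 ≤ M := le_trans (abs_nonneg a) hMa
  -- choice of a missing element for each translate
  have hmiss : ∀ t : ℤ, ∃ s, s ∈ ({a, b, c} : Set ℤ) ∧ s + t ∉ A := by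
    intro t
    obtain ⟨x, hx, hxA⟩ := Set.not_subset.mp (hA t)
    obtain ⟨s, hs, rfl⟩ := hx
    exact ⟨s, hs, hxA⟩
  set g : ℤ → ℤ := fun t => Classical.choose (hmiss t) with hg
  have hgS : ∀ t, g t ∈ ({a, b, c} : Set ℤ) := fun t => (Classical.choose_spec (hmiss t)).1
  have hgA : ∀ t, g t + t ∉ A := fun t => (Classical.choose_spec (hmiss t)).2
  have hgM : ∀ t, |g t| ≤ M := by
    intro t
    rcases hgS t with h | h | h <;> rw [h] <;> assumption
  -- counting
  have count : ∀ n : ℕ, 3 * ((A ∩ Set.Icc (-(n : ℤ)) (n : ℤ)).ncard : ℤ) ≤ 2 * (2 * n + 1) + 2 * M := by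
    intro n
    set In : Finset ℤ := Finset.Icc (-(n : ℤ)) n with hIn
    set B : Finset ℤ := In.filter (· ∉ A) with hB
    have hncard : (A ∩ Set.Icc (-(n : ℤ)) (n : ℤ)).ncard = (In.filter (· ∈ A)).card := by
      rw [← Set.ncard_coe_finset]
      congr 1
      ext x
      simp only [Finset.coe_filter, Set.mem_inter_iff, Set.mem_Icc, Set.mem_setOf_eq,
        Finset.mem_Icc, hIn]
      tauto
    have hsplit : (In.filter (· ∈ A)).card + B.card = In.card :=
      Finset.card_filter_add_card_filter_not _
    have hIncard : (In.card : ℤ) = 2 * n + 1 := by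
      rw [hIn, Int.card_Icc]
      omega
    set J : Finset ℤ := Finset.Icc (-(n : ℤ) + M) (n - M) with hJ
    have hJcard : 2 * (n : ℤ) + 1 - 2 * M ≤ J.card := by
      rw [hJ, Int.card_Icc]
      omega
    have hmaps : ∀ t ∈ J, g t + t ∈ B := by
      intro t ht
      rw [hJ, Finset.mem_Icc] at ht
      have h2 := abs_le.mp (hgM t)
      rw [hB, Finset.mem_filter, hIn, Finset.mem_Icc]
      refine ⟨⟨by omega, by omega⟩, hgA t⟩
    have hcount : J.card ≤ 3 * B.card := by
      apply Finset.card_le_mul_card_image_of_maps_to hmaps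
      intro x _
      have hsub : J.filter (fun t => g t + t = x) ⊆ {x - a, x - b, x - c} := by
        intro t ht
        rw [Finset.mem_filter] at ht
        simp only [Finset.mem_insert, Finset.mem_singleton]
        rcases hgS t with h | h | h <;> rw [h] at ht <;> omega
      calc (J.filter (fun t => g t + t = x)).card ≤ ({x - a, x - b, x - c} : Finset ℤ).card :=
            Finset.card_le_card hsub
        _ ≤ 3 := by
            apply le_trans (Finset.card_insert_le _ _)
            apply Nat.succ_le_succ
            apply le_trans (Finset.card_insert_le _ _)
            simp
    rw [hncard]
    have h1 : ((In.filter (· ∈ A)).card : ℤ) + B.card = In.card := by exact_mod_cast hsplit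
    have h2 : (J.card : ℤ) ≤ 3 * B.card := by exact_mod_cast hcount
    omega
  -- pass to reals
  set f : ℕ → ℝ := fun n => ((A ∩ Set.Icc (-(n : ℤ)) (n : ℤ)).ncard : ℝ) / (2 * n + 1) with hf
  set gr : ℕ → ℝ := fun n => 2 / 3 + (2 * (M : ℝ) / 3) * (2 * (n : ℝ) + 1)⁻¹ with hgr
  have hpos : ∀ n : ℕ, (0 : ℝ) < 2 * (n : ℝ) + 1 := by
    intro n; positivity
  have hfg : ∀ n, f n ≤ gr n := by
    intro n
    have hc := count n
    have hcR : 3 * ((A ∩ Set.Icc (-(n : ℤ)) (n : ℤ)).ncard : ℝ) ≤ 2 * (2 * n + 1) + 2 * M := by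
      exact_mod_cast hc
    rw [hf, hgr]
    rw [div_le_iff₀ (hpos n)]
    have h1 : (2 * (n : ℝ) + 1)⁻¹ * (2 * (n : ℝ) + 1) = 1 :=
      inv_mul_cancel₀ (ne_of_gt (hpos n))
    nlinarith [h1]
  have hgrlim : Tendsto gr atTop (nhds (2 / 3)) := by
    have h1 : Tendsto (fun n : ℕ => 2 * (n : ℝ) + 1) atTop atTop := by
      apply Filter.tendsto_atTop_add_const_right
      exact (tendsto_natCast_atTop_atTop).const_mul_atTop (by norm_num)
    have h2 : Tendsto (fun n : ℕ => (2 * (n : ℝ) + 1)⁻¹) atTop (nhds 0) :=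
      h1.inv_tendsto_atTop
    have h3 : Tendsto (fun n : ℕ => (2 * (M : ℝ) / 3) * (2 * (n : ℝ) + 1)⁻¹) atTop (nhds 0) := by
      simpa using h2.const_mul (2 * (M : ℝ) / 3)
    rw [hgr]
    simpa using (tendsto_const_nhds (x := (2 : ℝ) / 3)).add h3
  have hbdd : IsBoundedUnder (· ≤ ·) atTop gr := hgrlim.isBoundedUnder_le
  have hcob : IsCoboundedUnder (· ≤ ·) atTop f := by
    apply Filter.isCoboundedUnder_le_of_le (x := 0) atTop
    intro n
    positivity
  calc upperDensity A = limsup f atTop := rfl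
    _ ≤ limsup gr atTop := limsup_le_limsup (Eventually.of_forall hfg) hcob hbdd
    _ = 2 / 3 := hgrlim.limsup_eq

theorem stmt2 (S : Set ℤ) (hS : S.ncard = 3) :
    (∀ A : Set ℤ, 2 / 3 < upperDensity A → ∃ t : ℤ, translateSet S t ⊆ A) ∧
      dF S ≤ 2 / 3 := by
  constructor
  · intro A hA
    by_contra h
    push_neg at h
    exact absurd (key3 S hS A fun t => h t) (not_le.mpr hA)
  · apply Real.sSup_le
    · rintro x ⟨A, hA, rfl⟩
      exact key3 S hS A hA
    · norm_num
end

section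
/- Let λ₁, λ₂ be coprime positive integers with λ₁ ≡ λ₂ (mod 3), and S = {0, λ₁, λ₁+λ₂}. Then the set A = (3ℤ) ∪ (3ℤ+1) contains no translate of S and no translate of -S, and has density 2/3. Consequently d_f(S, -S) = d_f(S) = 2/3. -/
open Filter Set

/-!
Since `3 ∤ λ₁` and `λ₁ + λ₂ ≡ 2λ₁ (mod 3)`, the three points of `{t, t + λ₁, t + λ₁ + λ₂}`
(and of `{t, t - λ₁, t - λ₁ - λ₂}`) lie in distinct residue classes mod 3, so one of them is
`≡ 2` and escapes `3ℤ ∪ (3ℤ + 1)`. Conversely, if `B` is `S`-free then every translate `S + t`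
misses `B` somewhere, and a missed point is charged by at most `|S|` translates; hence `B`
misses a `1/|S|`-proportion of every long window and has upper density at most
`1 - 1/|S| = 2/3`.
-/

open Topology

noncomputable def windowRatio (A : Set ℤ) (n : ℕ) : ℝ :=
  ((A ∩ Icc (-(n : ℤ)) n).ncard : ℝ) / (2 * n + 1)

lemma windowRatio_nonneg (A : Set ℤ) (n : ℕ) : 0 ≤ windowRatio A n := by
  unfold windowRatio; positivity

lemma windowRatio_sub (A : Set ℤ) (n : ℕ) (c : ℝ) :
    windowRatio A n - c =
      (((A ∩ Icc (-(n : ℤ)) n).ncard : ℝ) - c * (2 * n + 1)) / (2 * n + 1) := by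
  unfold windowRatio; field_simp

lemma tendsto_div_two_mul_add_one (C : ℝ) :
    Tendsto (fun n : ℕ => C / (2 * n + 1)) atTop (𝓝 0) :=
  tendsto_const_nhds.div_atTop <| tendsto_atTop_add_const_right _ _ <|
    (tendsto_natCast_atTop_atTop (R := ℝ)).const_mul_atTop two_pos

lemma upperDensity_le_of_ncard_le {A : Set ℤ} {c C : ℝ}
    (h : ∀ n : ℕ, ((A ∩ Icc (-(n : ℤ)) n).ncard : ℝ) ≤ c * (2 * n + 1) + C) :
    upperDensity A ≤ c := by
  have hbound (n : ℕ) : windowRatio A n ≤ c + C / (2 * n + 1) := by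
    rw [← sub_le_iff_le_add', windowRatio_sub]
    gcongr
    linarith [h n]
  have hlim : Tendsto (fun n : ℕ => c + C / (2 * n + 1)) atTop (𝓝 c) := by
    simpa using (tendsto_div_two_mul_add_one C).const_add c
  calc upperDensity A ≤ limsup (fun n : ℕ => c + C / (2 * n + 1)) atTop :=
        limsup_le_limsup (.of_forall hbound)
          (isCoboundedUnder_le_of_le atTop (windowRatio_nonneg A)) hlim.isBoundedUnder_le
    _ = c := hlim.limsup_eq

lemma tendsto_windowRatio_of_abs_sub_le {A : Set ℤ} {c C : ℝ}
    (h : ∀ n : ℕ, |((A ∩ Icc (-(n : ℤ)) n).ncard : ℝ) - c * (2 * n + 1)| ≤ C) :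
    Tendsto (windowRatio A) atTop (𝓝 c) := by
  rw [tendsto_iff_norm_sub_tendsto_zero]
  refine squeeze_zero (fun _ => norm_nonneg _) (fun n => ?_) (tendsto_div_two_mul_add_one C)
  rw [windowRatio_sub, Real.norm_eq_abs, abs_div,
    abs_of_pos (by positivity : (0 : ℝ) < 2 * n + 1)]
  gcongr
  exact h n

lemma ncard_inter_Icc_eq_card_filter (A : Set ℤ) [DecidablePred (· ∈ A)] (a b : ℤ) :
    (A ∩ Icc a b).ncard = ((Finset.Icc a b).filter (· ∈ A)).card := by
  rw [← Set.ncard_coe_finset]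
  congr 1
  ext x
  simp [and_comm]

lemma sFree_iff {S A : Set ℤ} : SFree S A ↔ ∀ t, ∃ s ∈ S, s + t ∉ A := by
  simp only [SFree, translateSet, Set.image_subset_iff, Set.not_subset, Set.mem_preimage]

/-- Every `t ∈ [-n, n]` has a point `s + t ∉ B` (`s ∈ S`) in the window `[-(n+m), n+m]`, and
each such point is charged by at most `|S|` values of `t`. -/
lemma SFree.two_mul_add_one_le_card_mul {S : Finset ℤ} {B : Set ℤ} [DecidablePred (· ∈ B)]
    (hB : SFree S B) {m : ℕ} (hm : ∀ s ∈ S, |s| ≤ m) (n : ℕ) :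
    2 * n + 1 ≤
      ((Finset.Icc (-((n + m : ℕ) : ℤ)) (n + m : ℕ)).filter (· ∉ B)).card * S.card := by
  set M := (Finset.Icc (-((n + m : ℕ) : ℤ)) (n + m : ℕ)).filter (· ∉ B)
  have hcover : Finset.Icc (-(n : ℤ)) n ⊆ M.biUnion (fun x => S.image (x - ·)) := by
    intro t ht
    obtain ⟨s, hs, hst⟩ := sFree_iff.mp hB t
    have hs' := abs_le.mp (hm s (Finset.mem_coe.mp hs))
    simp only [Finset.mem_Icc] at ht
    simp only [M, Finset.mem_biUnion, Finset.mem_image, Finset.mem_filter, Finset.mem_Icc]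
    exact ⟨s + t, ⟨⟨by push_cast; linarith, by push_cast; linarith⟩, hst⟩, s, hs, by ring⟩
  calc 2 * n + 1 = (Finset.Icc (-(n : ℤ)) n).card := by simp; omega
    _ ≤ (M.biUnion (fun x => S.image (x - ·))).card := Finset.card_le_card hcover
    _ ≤ M.card * S.card := Finset.card_biUnion_le_card_mul _ _ _ fun _ _ => Finset.card_image_le

lemma SFree.ncard_window_le {S : Finset ℤ} {B : Set ℤ} (hB : SFree S B) {m : ℕ}
    (hm : ∀ s ∈ S, |s| ≤ m) (n : ℕ) :
    ((B ∩ Icc (-(n : ℤ)) n).ncard : ℝ) ≤ (1 - 1 / S.card) * (2 * n + 1) + 2 * m := by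
  classical
  set N := Finset.Icc (-((n + m : ℕ) : ℤ)) (n + m : ℕ)
  have hmiss : 2 * n + 1 ≤ (N.filter (· ∉ B)).card * S.card :=
    hB.two_mul_add_one_le_card_mul hm n
  have hsplit := Finset.card_filter_add_card_filter_not (s := N) (· ∈ B)
  have hmono : (B ∩ Icc (-(n : ℤ)) n).ncard ≤ (N.filter (· ∈ B)).card := by
    rw [ncard_inter_Icc_eq_card_filter]
    exact Finset.card_le_card <|
      Finset.filter_subset_filter _ (Finset.Icc_subset_Icc (by omega) (by omega))
  have hN : N.card = 2 * (n + m) + 1 := by simp [N]; omega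
  have key :
      S.card * (B ∩ Icc (-(n : ℤ)) n).ncard + (2 * n + 1) ≤ S.card * (2 * (n + m) + 1) := by
    have := Nat.mul_le_mul_left S.card hmono
    have := congrArg (S.card * ·) hsplit
    simp only [hN, mul_add] at this
    linarith
  have hpos : (0 : ℝ) < S.card := by
    have : 0 < S.card := Nat.pos_of_ne_zero fun h => by simp [h] at hmiss
    exact_mod_cast this
  have key' : (S.card : ℝ) * (B ∩ Icc (-(n : ℤ)) n).ncard + (2 * n + 1)
      ≤ S.card * (2 * (n + m) + 1) := by
    exact_mod_cast key
  rw [← mul_le_mul_iff_of_pos_left hpos]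
  calc _ ≤ (S.card : ℝ) * (2 * (n + m) + 1) - (2 * n + 1) := by linarith
    _ = _ := by field_simp; ring

lemma SFree.upperDensity_le {S : Finset ℤ} {B : Set ℤ} (hB : SFree S B) :
    upperDensity B ≤ 1 - 1 / S.card := by
  obtain ⟨m, hm⟩ := (S.image fun s => |s|.toNat).exists_le
  refine upperDensity_le_of_ncard_le (hB.ncard_window_le (m := m) fun s hs => ?_)
  have := hm _ (Finset.mem_image_of_mem _ hs)
  omega

lemma SFree.upperDensity_le_two_thirds {a b c : ℤ} {B : Set ℤ} (hB : SFree {a, b, c} B) :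
    upperDensity B ≤ 2 / 3 := by
  classical
  rw [show ({a, b, c} : Set ℤ) = ↑({a, b, c} : Finset ℤ) by push_cast; rfl] at hB
  calc upperDensity B ≤ 1 - 1 / ({a, b, c} : Finset ℤ).card := hB.upperDensity_le
    _ ≤ 1 - 1 / 3 := by
      gcongr
      exact_mod_cast Finset.card_le_three
    _ = 2 / 3 := by norm_num

lemma card_filter_emod_three_eq_two (n : ℕ) :
    ((Finset.Icc (-(n : ℤ)) n).filter (· % 3 = 2)).card
      = (((n : ℤ) - 2) / 3 + ((n : ℤ) + 2) / 3 + 1).toNat := by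
  have himage : (Finset.Icc (-(n : ℤ)) n).filter (· % 3 = 2)
      = (Finset.Icc (-(((n : ℤ) + 2) / 3)) (((n : ℤ) - 2) / 3)).image (fun k => 3 * k + 2) := by
    ext x
    simp only [Finset.mem_filter, Finset.mem_image, Finset.mem_Icc]
    constructor
    · rintro ⟨⟨hlo, hhi⟩, hx⟩
      exact ⟨(x - 2) / 3, by omega, by omega⟩
    · rintro ⟨k, ⟨hlo, hhi⟩, rfl⟩
      omega
  rw [himage, Finset.card_image_of_injective _ (fun a b h => by omega), Int.card_Icc]
  congr 1
  ring

lemma abs_ncard_emod_three_zero_or_one_sub_le (n : ℕ) :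
    |(({x : ℤ | x % 3 = 0 ∨ x % 3 = 1} ∩ Icc (-(n : ℤ)) n).ncard : ℝ) - 2 / 3 * (2 * n + 1)|
      ≤ 2 := by
  classical
  set g := ({x : ℤ | x % 3 = 0 ∨ x % 3 = 1} ∩ Icc (-(n : ℤ)) n).ncard
  have hsplit := Finset.card_filter_add_card_filter_not (s := Finset.Icc (-(n : ℤ)) n)
    (· ∈ {x : ℤ | x % 3 = 0 ∨ x % 3 = 1})
  rw [← ncard_inter_Icc_eq_card_filter, Int.card_Icc,
    Finset.filter_congr (q := (· % 3 = 2)) (fun x _ => by simp only [Set.mem_ofPred_eq]; omega),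
    card_filter_emod_three_eq_two] at hsplit
  have hlo : (2 * (2 * n + 1) : ℤ) - 6 ≤ 3 * g := by omega
  have hhi : 3 * (g : ℤ) ≤ 2 * (2 * n + 1) + 6 := by omega
  have hlo' : (2 * (2 * n + 1) : ℝ) - 6 ≤ 3 * g := by exact_mod_cast hlo
  have hhi' : 3 * (g : ℝ) ≤ 2 * (2 * n + 1) + 6 := by exact_mod_cast hhi
  rw [abs_le]
  constructor <;> linarith

lemma sFree_emod_three_zero_or_one {a b : ℤ} (ha : a % 3 ≠ 0) (hb : b % 3 = 2 * a % 3) :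
    SFree {0, a, b} {x : ℤ | x % 3 = 0 ∨ x % 3 = 1} := by
  rw [sFree_iff]
  intro t
  simp only [Set.mem_insert_iff, Set.mem_singleton_iff, exists_eq_or_imp, exists_eq_left,
    Set.mem_ofPred_eq]
  omega

theorem stmt3_general (l1 l2 : ℤ) (hco : Int.gcd l1 l2 = 1)
    (hmod : l1 % 3 = l2 % 3) :
    SFree ({0, l1, l1 + l2} : Set ℤ) {x : ℤ | x % 3 = 0 ∨ x % 3 = 1} ∧
    SFree (-({0, l1, l1 + l2} : Set ℤ)) {x : ℤ | x % 3 = 0 ∨ x % 3 = 1} ∧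
    upperDensity {x : ℤ | x % 3 = 0 ∨ x % 3 = 1} = 2 / 3 ∧
    lowerDensity {x : ℤ | x % 3 = 0 ∨ x % 3 = 1} = 2 / 3 ∧
    dF2 ({0, l1, l1 + l2} : Set ℤ) = 2 / 3 ∧
    dF ({0, l1, l1 + l2} : Set ℤ) = 2 / 3 := by
  have hl1 : l1 % 3 ≠ 0 := fun h => by
    have := Int.dvd_gcd (Int.dvd_of_emod_eq_zero h) (Int.dvd_of_emod_eq_zero (hmod ▸ h))
    rw [hco] at this
    norm_num at this
  have hfree : SFree {0, l1, l1 + l2} {x : ℤ | x % 3 = 0 ∨ x % 3 = 1} :=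
    sFree_emod_three_zero_or_one hl1 (by omega)
  have hfree_neg : SFree (-{0, l1, l1 + l2}) {x : ℤ | x % 3 = 0 ∨ x % 3 = 1} := by
    rw [Set.neg_insert, Set.neg_insert, Set.neg_singleton, neg_zero]
    exact sFree_emod_three_zero_or_one (by omega) (by omega)
  have hdens := tendsto_windowRatio_of_abs_sub_le abs_ncard_emod_three_zero_or_one_sub_le
  refine ⟨hfree, hfree_neg, hdens.limsup_eq, hdens.liminf_eq, ?_, ?_⟩
  · exact IsGreatest.csSup_eq ⟨⟨_, ⟨hfree, hfree_neg⟩, hdens.limsup_eq⟩,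
      by rintro _ ⟨B, hB, rfl⟩; exact hB.1.upperDensity_le_two_thirds⟩
  · exact IsGreatest.csSup_eq ⟨⟨_, hfree, hdens.limsup_eq⟩,
      by rintro _ ⟨B, hB, rfl⟩; exact hB.upperDensity_le_two_thirds⟩

theorem stmt3 (l1 l2 : ℤ) (h1 : 0 < l1) (h2 : 0 < l2) (hco : Int.gcd l1 l2 = 1)
    (hmod : l1 % 3 = l2 % 3) :
    SFree ({0, l1, l1 + l2} : Set ℤ) {x : ℤ | x % 3 = 0 ∨ x % 3 = 1} ∧
    SFree (-({0, l1, l1 + l2} : Set ℤ)) {x : ℤ | x % 3 = 0 ∨ x % 3 = 1} ∧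
    upperDensity {x : ℤ | x % 3 = 0 ∨ x % 3 = 1} = 2 / 3 ∧
    lowerDensity {x : ℤ | x % 3 = 0 ∨ x % 3 = 1} = 2 / 3 ∧
    dF2 ({0, l1, l1 + l2} : Set ℤ) = 2 / 3 ∧
    dF ({0, l1, l1 + l2} : Set ℤ) = 2 / 3 :=
  stmt3_general l1 l2 hco hmod
end

section
/- Let λ₁, λ₂ be coprime positive integers with λ₁ ≡ λ₂ + 1 (mod 3), and S = {0, λ₁, λ₁+λ₂}. Then there exists a set A ⊆ ℤ, periodic with period 2λ₁+λ₂, containing no translate of S and no translate of -S, with density ⌊(2/3)(2λ₁+λ₂)⌋/(2λ₁+λ₂). Hence d_f(S,-S) ≥ ⌊(2/3)(2λ₁+λ₂)⌋/(2λ₁+λ₂). -/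
open Filter Set

/-! Modulo `m = 2λ₁ + λ₂` we have `λ₁ + λ₂ ≡ -λ₁`, so every translate of `S` or of `-S` is congruent
to a progression `{x - λ₁, x, x + λ₁}`. As `λ₁` is invertible modulo `m = 3k + 2`, the set of
`x ≡ λ₁ r (mod m)` with `0 ≤ r ≤ 3k` and `r ≢ 2 (mod 3)` contains no such progression: it would
come from three consecutive values of `r` (no wrap-around occurs because `r ≤ m - 2`). This set
has `2k + 1 = ⌊2m/3⌋` residues modulo `m`, and an `m`-periodic set with `d` residues modulo `m`
has density `d / m`. -/

open Function Topology

section PeriodicDensity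

variable {A : Set ℤ} {m : ℤ}

lemma ncard_inter_Ico_add_eq (hA : Periodic (· ∈ A) m) (hm : 0 < m) (a : ℤ) :
    (A ∩ Ico a (a + m)).ncard = (A ∩ Ico 0 m).ncard := by
  have hmem (b x : ℤ) : toIcoMod hm b x ∈ A ↔ x ∈ A := by
    rw [← self_sub_toIcoDiv_zsmul, hA.sub_zsmul_eq]
  refine ncard_congr (fun x _ ↦ toIcoMod hm 0 x) ?_ ?_ ?_
  · rintro x ⟨hxA, -⟩
    exact ⟨(hmem 0 x).2 hxA, by simpa using toIcoMod_mem_Ico hm 0 x⟩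
  · rintro x y ⟨-, hx⟩ ⟨-, hy⟩ hxy
    rw [← (toIcoMod_eq_self hm).2 hx, ← (toIcoMod_eq_self hm).2 hy,
      ← toIcoMod_toIcoMod hm a 0 x, hxy, toIcoMod_toIcoMod]
  · rintro y ⟨hyA, hy⟩
    refine ⟨toIcoMod hm a y, ⟨(hmem a y).2 hyA, toIcoMod_mem_Ico hm a y⟩, ?_⟩
    rw [toIcoMod_toIcoMod, (toIcoMod_eq_self hm).2 (by simpa using hy)]

lemma ncard_inter_Ico_add_mul_eq (hA : Periodic (· ∈ A) m) (hm : 0 < m) (a : ℤ) (q : ℕ) :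
    (A ∩ Ico a (a + q * m)).ncard = q * (A ∩ Ico 0 m).ncard := by
  induction q with
  | zero => simp
  | succ q ih =>
    have hsplit : Ico a (a + (q + 1 : ℕ) * m)
        = Ico a (a + q * m) ∪ Ico (a + q * m) (a + q * m + m) := by
      rw [Ico_union_Ico_eq_Ico (by nlinarith) (by omega)]
      push_cast; ring_nf
    rw [hsplit, inter_union_distrib_left, ncard_union_eq, ih, ncard_inter_Ico_add_eq hA hm]
    · ring
    exact Ico_disjoint_Ico_same.mono inter_subset_right inter_subset_right

lemma abs_mul_ncard_inter_Ico_sub_le (hA : Periodic (· ∈ A) m) (hm : 0 < m) (a : ℤ) {L : ℤ}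
    (hL : 0 ≤ L) :
    |m * (A ∩ Ico a (a + L)).ncard - (A ∩ Ico 0 m).ncard * L| ≤ (A ∩ Ico 0 m).ncard * m := by
  set q : ℕ := (L / m).toNat
  have hq : (q : ℤ) = L / m := Int.toNat_of_nonneg (Int.ediv_nonneg hL hm.le)
  have hdiv : m * (L / m) + L % m = L := Int.mul_ediv_add_emod L m
  have hr0 : 0 ≤ L % m := Int.emod_nonneg L hm.ne'
  have hrm : L % m < m := Int.emod_lt_of_pos L hm
  have hlow : q * (A ∩ Ico 0 m).ncard ≤ (A ∩ Ico a (a + L)).ncard := by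
    rw [← ncard_inter_Ico_add_mul_eq hA hm a q]
    exact ncard_le_ncard (inter_subset_inter_right A (Ico_subset_Ico_right (by nlinarith)))
      ((finite_Ico _ _).inter_of_right _)
  have hup : (A ∩ Ico a (a + L)).ncard ≤ (q + 1) * (A ∩ Ico 0 m).ncard := by
    rw [← ncard_inter_Ico_add_mul_eq hA hm a (q + 1)]
    exact ncard_le_ncard
      (inter_subset_inter_right A (Ico_subset_Ico_right (by push_cast; nlinarith)))
      ((finite_Ico _ _).inter_of_right _)
  zify at hlow hup
  rw [hq] at hlow hup
  set d : ℤ := ((A ∩ Ico 0 m).ncard : ℤ)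
  have hd : 0 ≤ d := Nat.cast_nonneg _
  rw [abs_le]
  constructor <;> nlinarith [mul_le_mul_of_nonneg_left hrm.le hd, mul_nonneg hd hr0]

lemma tendsto_ncard_inter_Icc_div_of_periodic (hA : Periodic (· ∈ A) m) (hm : 0 < m) :
    Tendsto (fun n : ℕ ↦ ((A ∩ Icc (-(n : ℤ)) n).ncard : ℝ) / (2 * n + 1)) atTop
      (𝓝 ((A ∩ Ico 0 m).ncard / m)) := by
  set d : ℝ := ((A ∩ Ico 0 m).ncard : ℝ)
  have hlen : Tendsto (fun n : ℕ ↦ 2 * (n : ℝ) + 1) atTop atTop :=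
    tendsto_atTop_add_const_right _ _ (tendsto_natCast_atTop_atTop.const_mul_atTop two_pos)
  rw [tendsto_iff_dist_tendsto_zero]
  refine squeeze_zero (fun _ ↦ dist_nonneg) (fun n ↦ ?_)
    ((tendsto_const_nhds (x := d)).div_atTop hlen)
  have hIcc : Icc (-(n : ℤ)) n = Ico (-(n : ℤ)) (-n + (2 * n + 1)) := by
    ext x; simp only [mem_Icc, mem_Ico]; omega
  have hbound := abs_mul_ncard_inter_Ico_sub_le hA hm (-(n : ℤ)) (L := 2 * n + 1) (by positivity)
  rw [← hIcc] at hbound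
  have hboundR : |(m : ℝ) * (A ∩ Icc (-(n : ℤ)) n).ncard - d * (2 * n + 1)| ≤ d * m := by
    have := (Int.cast_le (R := ℝ)).2 hbound
    push_cast at this
    exact this
  have hmR : (0 : ℝ) < m := by exact_mod_cast hm
  have hL : (0 : ℝ) < 2 * n + 1 := by positivity
  have hsub : ((A ∩ Icc (-(n : ℤ)) n).ncard : ℝ) / (2 * n + 1) - d / m
      = (m * (A ∩ Icc (-(n : ℤ)) n).ncard - d * (2 * n + 1)) / (m * (2 * n + 1)) := by
    field_simp
  rw [Real.dist_eq, hsub, abs_div, abs_of_pos (mul_pos hmR hL),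
    div_le_div_iff₀ (mul_pos hmR hL) hL]
  nlinarith [mul_le_mul_of_nonneg_right hboundR hL.le]

lemma upperDensity_eq_of_periodic (hA : Periodic (· ∈ A) m) (hm : 0 < m) :
    upperDensity A = (A ∩ Ico 0 m).ncard / m :=
  (tendsto_ncard_inter_Icc_div_of_periodic hA hm).limsup_eq

lemma lowerDensity_eq_of_periodic (hA : Periodic (· ∈ A) m) (hm : 0 < m) :
    lowerDensity A = (A ∩ Ico 0 m).ncard / m :=
  (tendsto_ncard_inter_Icc_div_of_periodic hA hm).liminf_eq

end PeriodicDensity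

lemma upperDensity_le_one (A : Set ℤ) : upperDensity A ≤ 1 := by
  refine limsup_le_of_le (isCoboundedUnder_le_of_le atTop fun n ↦ by positivity)
    (Eventually.of_forall fun n ↦ ?_)
  rw [div_le_one (by positivity)]
  have hcard : (A ∩ Icc (-(n : ℤ)) n).ncard ≤ 2 * n + 1 := by
    calc _ ≤ (Icc (-(n : ℤ)) n).ncard := ncard_le_ncard inter_subset_right (finite_Icc _ _)
      _ = 2 * n + 1 := by
        rw [← Finset.coe_Icc, ncard_coe_finset, Int.card_Icc]; omega
  exact_mod_cast hcard

lemma upperDensity_le_dF2 {S A : Set ℤ} (hS : SFree S A) (hS' : SFree (-S) A) :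
    upperDensity A ≤ dF2 S :=
  le_csSup ⟨1, by rintro _ ⟨B, -, rfl⟩; exact upperDensity_le_one B⟩ ⟨A, ⟨hS, hS'⟩, rfl⟩

section ScaledResidues

def scaledResidues (l m : ℤ) (R : Set ℤ) : Set ℤ := {x | ∃ r ∈ R, x ≡ l * r [ZMOD m]}

variable {l m : ℤ} {R : Set ℤ}

lemma periodic_mem_scaledResidues (l m : ℤ) (R : Set ℤ) :
    Periodic (· ∈ scaledResidues l m R) m := by
  intro x
  simp only [scaledResidues, mem_ofPred_eq, Int.ModEq, Int.add_emod_right]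

lemma eq_of_mul_modEq_of_mem_Ico (hl : IsCoprime l m) {a b : ℤ} (ha : a ∈ Ico 0 m)
    (hb : b ∈ Ico 0 m) (h : l * a ≡ l * b [ZMOD m]) : a = b := by
  have hdvd : m ∣ l * (b - a) := by rw [mul_sub]; exact h.dvd
  have := Int.eq_zero_of_dvd_of_natAbs_lt_natAbs (hl.symm.dvd_of_dvd_mul_left hdvd)
    (by simp only [mem_Ico] at ha hb; omega)
  omega

lemma scaledResidues_inter_Ico (hm : 0 < m) :
    scaledResidues l m R ∩ Ico 0 m = (fun r ↦ l * r % m) '' R := by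
  ext x
  constructor
  · rintro ⟨⟨r, hr, hx⟩, hx0, hxm⟩
    exact ⟨r, hr, by simp only [← hx.eq, Int.emod_eq_of_lt hx0 hxm]⟩
  · rintro ⟨r, hr, rfl⟩
    exact ⟨⟨r, hr, Int.mod_modEq _ _⟩, Int.emod_nonneg _ hm.ne', Int.emod_lt_of_pos _ hm⟩

lemma ncard_scaledResidues_inter_Ico (hm : 0 < m) (hl : IsCoprime l m) (hR : R ⊆ Ico 0 m) :
    (scaledResidues l m R ∩ Ico 0 m).ncard = R.ncard := by
  rw [scaledResidues_inter_Ico hm]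
  exact InjOn.ncard_image fun a ha b hb hab ↦ eq_of_mul_modEq_of_mem_Ico hl (hR ha) (hR hb) hab

lemma scaledResidues_not_threeAP (hl : IsCoprime l m) (hR : R ⊆ Ico 0 (m - 1))
    (hR3 : ∀ r, ¬(r ∈ R ∧ r + 1 ∈ R ∧ r + 2 ∈ R)) (x : ℤ) :
    ¬(x - l ∈ scaledResidues l m R ∧ x ∈ scaledResidues l m R ∧
      x + l ∈ scaledResidues l m R) := by
  rintro ⟨⟨r₁, hr₁, h₁⟩, ⟨r₂, hr₂, h₂⟩, ⟨r₃, hr₃, h₃⟩⟩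
  have hR' : R ⊆ Ico 0 m := hR.trans (Ico_subset_Ico_right (by omega))
  have hsucc {a b : ℤ} (ha : a ∈ R) (hb : b ∈ R) (h : l * a + l ≡ l * b [ZMOD m]) : a + 1 = b :=
    eq_of_mul_modEq_of_mem_Ico hl (by have := hR ha; simp only [mem_Ico] at this ⊢; omega)
      (hR' hb) (by rw [mul_add, mul_one]; exact h)
  have h₁₂ : r₁ + 1 = r₂ := hsucc hr₁ hr₂ <| by
    calc l * r₁ + l ≡ x - l + l [ZMOD m] := h₁.symm.add_right l
      _ = x := by ring
      _ ≡ l * r₂ [ZMOD m] := h₂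
  have h₂₃ : r₂ + 1 = r₃ := hsucc hr₂ hr₃ (h₂.symm.add_right l |>.trans h₃)
  exact hR3 r₁ ⟨hr₁, h₁₂ ▸ hr₂, by rw [← h₂₃, ← h₁₂] at hr₃; convert hr₃ using 1; ring⟩

end ScaledResidues

section Free

variable {A : Set ℤ} {l l' : ℤ}

lemma sFree_of_not_threeAP (hA : Periodic (· ∈ A) (2 * l + l'))
    (hAP : ∀ x, ¬(x - l ∈ A ∧ x ∈ A ∧ x + l ∈ A)) : SFree {0, l, l + l'} A := by
  intro t hsub
  refine hAP t ⟨(hA (t - l)).mp ?_, hsub ⟨0, by simp, by simp⟩, hsub ⟨l, by simp, by ring⟩⟩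
  exact hsub ⟨l + l', by simp, by ring⟩

lemma sFree_neg_of_not_threeAP (hA : Periodic (· ∈ A) (2 * l + l'))
    (hAP : ∀ x, ¬(x - l ∈ A ∧ x ∈ A ∧ x + l ∈ A)) : SFree (-{0, l, l + l'}) A := by
  intro t hsub
  refine hAP t ⟨hsub ⟨-l, by simp, by ring⟩, hsub ⟨0, by simp, by simp⟩, (hA.sub_eq (t + l)).mp ?_⟩
  exact hsub ⟨-(l + l'), by simp, by ring⟩

end Free

lemma ncard_setOf_emod_three_ne_two (k : ℕ) :
    {r : ℤ | 0 ≤ r ∧ r ≤ 3 * k ∧ r % 3 ≠ 2}.ncard = 2 * k + 1 := by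
  induction k with
  | zero =>
    rw [show {r : ℤ | 0 ≤ r ∧ r ≤ 3 * (0 : ℕ) ∧ r % 3 ≠ 2} = {0} by ext; simp; omega]
    simp
  | succ k ih =>
    have hfin : {r : ℤ | 0 ≤ r ∧ r ≤ 3 * k ∧ r % 3 ≠ 2}.Finite :=
      (finite_Icc (0 : ℤ) (3 * k)).subset fun _ hr ↦ ⟨hr.1, hr.2.1⟩
    rw [show {r : ℤ | 0 ≤ r ∧ r ≤ 3 * (k + 1 : ℕ) ∧ r % 3 ≠ 2}
        = insert (3 * k + 3 : ℤ) (insert (3 * k + 1 : ℤ)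
            {r : ℤ | 0 ≤ r ∧ r ≤ 3 * k ∧ r % 3 ≠ 2}) by
          ext; simp; omega,
      ncard_insert_of_notMem (by simp) (hfin.insert _),
      ncard_insert_of_notMem (by simp) hfin, ih]
    ring

lemma floor_two_div_three_mul_three_mul_add_two (k : ℕ) :
    ⌊(2 : ℝ) / 3 * (3 * k + 2)⌋ = 2 * k + 1 := by
  rw [Int.floor_eq_iff]
  push_cast
  constructor <;> linarith

theorem stmt4 (l1 l2 : ℤ) (h1 : 0 < l1) (h2 : 0 < l2) (hco : Int.gcd l1 l2 = 1)
    (hmod : l1 % 3 = (l2 + 1) % 3) :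
    (∃ A : Set ℤ,
      (∀ x : ℤ, x ∈ A ↔ x + (2 * l1 + l2) ∈ A) ∧
      SFree ({0, l1, l1 + l2} : Set ℤ) A ∧
      SFree (-({0, l1, l1 + l2} : Set ℤ)) A ∧
      upperDensity A = (⌊(2 : ℝ) / 3 * (2 * l1 + l2)⌋ : ℝ) / (2 * l1 + l2) ∧
      lowerDensity A = (⌊(2 : ℝ) / 3 * (2 * l1 + l2)⌋ : ℝ) / (2 * l1 + l2)) ∧
    dF2 ({0, l1, l1 + l2} : Set ℤ) ≥ (⌊(2 : ℝ) / 3 * (2 * l1 + l2)⌋ : ℝ) / (2 * l1 + l2) := by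
  obtain ⟨k, hk⟩ : ∃ k : ℕ, 2 * l1 + l2 = 3 * k + 2 := ⟨((2 * l1 + l2) / 3).toNat, by omega⟩
  have hm : 0 < 2 * l1 + l2 := by omega
  have hcop : IsCoprime l1 (2 * l1 + l2) := by
    simpa [add_comm, mul_comm] using (Int.isCoprime_iff_gcd_eq_one.mpr hco).add_mul_left_right 2
  set R : Set ℤ := {r | 0 ≤ r ∧ r ≤ 3 * k ∧ r % 3 ≠ 2}
  have hR : R ⊆ Ico 0 (2 * l1 + l2 - 1) := fun r ⟨h0, hr, _⟩ ↦ ⟨h0, by omega⟩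
  have hper := periodic_mem_scaledResidues l1 (2 * l1 + l2) R
  have hAP := scaledResidues_not_threeAP hcop hR
    fun r ⟨⟨_, _, h₀⟩, ⟨_, _, h₁⟩, ⟨_, _, h₂⟩⟩ ↦ by omega
  have hS := sFree_of_not_threeAP hper hAP
  have hS' := sFree_neg_of_not_threeAP hper hAP
  have hdensity : ((scaledResidues l1 (2 * l1 + l2) R ∩ Ico 0 (2 * l1 + l2)).ncard : ℝ)
      / ((2 * l1 + l2 : ℤ) : ℝ) = (⌊(2 : ℝ) / 3 * (2 * l1 + l2)⌋ : ℝ) / (2 * l1 + l2) := by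
    have hkR : (2 * l1 + l2 : ℝ) = 3 * k + 2 := by exact_mod_cast hk
    rw [ncard_scaledResidues_inter_Ico hm hcop (hR.trans (Ico_subset_Ico_right (by omega))),
      ncard_setOf_emod_three_ne_two, hkR, floor_two_div_three_mul_three_mul_add_two, hk]
    push_cast
    ring
  refine ⟨⟨_, fun x ↦ (hper x).to_iff.symm, hS, hS', ?_, ?_⟩, ?_⟩
  · rw [upperDensity_eq_of_periodic hper hm, hdensity]
  · rw [lowerDensity_eq_of_periodic hper hm, hdensity]
  · rw [← hdensity, ← upperDensity_eq_of_periodic hper hm]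
    exact upperDensity_le_dF2 hS hS'
end

section
/- Let λ₁, λ₂ be coprime positive integers with λ₁ ≡ λ₂ + 1 (mod 3), S = {0, λ₁, λ₁+λ₂}, and A ⊆ ℤ an S-free set. For t ∈ ℤ let I₁(t) = {t+1, ..., t+2λ₁+λ₂} and I₂(t) = {t+λ₁+λ₂+1, ..., t+3λ₁+2λ₂}. Then 2|I₁(t) \ A| + |I₂(t) \ A| ≥ 2λ₁+λ₂. -/
/-!
Each translate `{m, m + λ₁, m + λ₁ + λ₂}` has a point outside `A`, so each `m ∈ I₁(t)` can be sent
to a point of `(I₁(t) ∪ I₂(t)) \ A` near it. With a suitable choice (taking `m - λ₁` instead of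
`m + λ₁ + λ₂` when `m, m + λ₁, m + λ₂ ∈ A` and `t + λ₁ < m ≤ t + 2λ₁`), a point of `I₁ \ I₂` has at
most two preimages, a point of `I₁ ∩ I₂` at most three and a point of `I₂ \ I₁` at most one.
Counting preimages gives `|I₁(t)| ≤ 2 |I₁(t) \ A| + |I₂(t) \ A|`.
-/
open Filter Set

open scoped Finset

theorem SFree.add_add_notMem {A : Set ℤ} {a b x : ℤ} (hA : SFree {0, a, a + b} A)
    (hx : x ∈ A) (hxa : x + a ∈ A) : x + a + b ∉ A := by
  intro hxab
  apply hA x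
  rintro _ ⟨s, hs, rfl⟩
  rcases hs with rfl | rfl | rfl
  · simpa using hx
  · simpa [add_comm] using hxa
  · simpa [add_comm, add_left_comm, add_assoc] using hxab

section GapChoice

variable {A : Set ℤ} {a b t m y : ℤ}

open Classical in
noncomputable def gapChoice (A : Set ℤ) (a b t m : ℤ) : ℤ :=
  if m ∉ A then m
  else if m + a ∉ A then m + a
  else if m + b ∈ A ∧ t + a < m ∧ m ≤ t + 2 * a then m - a
  else m + a + b

theorem gapChoice_notMem (hS : ∀ x, x ∈ A → x + a ∈ A → x + a + b ∉ A) :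
    gapChoice A a b t m ∉ A := by
  unfold gapChoice
  split_ifs with h₀ h₁ h₂
  · intro h
    exact hS (m - a) h (by simpa using h₀) (by simpa using h₂.1)
  · exact hS m h₀ h₁
  · exact h₁
  · exact h₀

theorem eq_of_gapChoice_eq (h : gapChoice A a b t m = y) :
    m = y ∨ (m ∈ A ∧ m = y - a) ∨ (t + a < m ∧ m ≤ t + 2 * a ∧ m = y + a) ∨
      (¬(m + b ∈ A ∧ t + a < m ∧ m ≤ t + 2 * a) ∧ m = y - a - b) := by
  unfold gapChoice at h
  split_ifs at h <;> grind

theorem gapChoice_mem_Icc (ha : 0 < a) (hb : 0 < b)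
    (hm : m ∈ Finset.Icc (t + 1) (t + 2 * a + b)) :
    gapChoice A a b t m ∈ Finset.Icc (t + 1) (t + 3 * a + 2 * b) := by
  rw [Finset.mem_Icc] at hm ⊢
  unfold gapChoice
  split_ifs <;> omega

theorem card_gapChoice_fiber_le (ha : 0 < a) (hb : 0 < b) :
    #{m ∈ Finset.Icc (t + 1) (t + 2 * a + b) | gapChoice A a b t m = y} ≤
      (if y ≤ t + 2 * a + b then 2 else 0) + (if t + a + b < y then 1 else 0) := by
  set F := {m ∈ Finset.Icc (t + 1) (t + 2 * a + b) | gapChoice A a b t m = y}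
  have hF : ∀ m ∈ F, t + 1 ≤ m ∧ m ≤ t + 2 * a + b ∧
      (m = y ∨ (m ∈ A ∧ m = y - a) ∨ (t + a < m ∧ m ≤ t + 2 * a ∧ m = y + a) ∨
        (¬(m + b ∈ A ∧ t + a < m ∧ m ≤ t + 2 * a) ∧ m = y - a - b)) := fun m hm => by
    rw [Finset.mem_filter, Finset.mem_Icc] at hm
    exact ⟨hm.1.1, hm.1.2, eq_of_gapChoice_eq hm.2⟩
  by_cases hy₁ : y ≤ t + a
  · calc #F ≤ #{y, y + a} := Finset.card_le_card fun m hm => by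
          simp only [Finset.mem_insert, Finset.mem_singleton]; grind
      _ ≤ _ := Finset.card_le_two.trans (by split_ifs <;> omega)
  by_cases hy₂ : y ≤ t + a + b
  · calc #F ≤ #{y, y - a} := Finset.card_le_card fun m hm => by
          simp only [Finset.mem_insert, Finset.mem_singleton]; grind
      _ ≤ _ := Finset.card_le_two.trans (by split_ifs <;> omega)
  by_cases hy₃ : y ≤ t + 2 * a + b
  · calc #F ≤ #{y, y - a, y - a - b} := Finset.card_le_card fun m hm => by
          simp only [Finset.mem_insert, Finset.mem_singleton]; grind
      _ ≤ _ := Finset.card_le_three.trans (by split_ifs <;> omega)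
  -- Two preimages would be `y - a ∈ A` and `y - a - b`, but then `gapChoice` picks `y - 2 * a - b`
  -- for the latter, since `(y - a - b) + b = y - a ∈ A`.
  calc #F ≤ 1 := Finset.card_le_one.mpr fun m hm m' hm' => by grind
    _ ≤ _ := by split_ifs <;> omega

theorem two_mul_ncard_Icc_diff_add_ncard_Icc_diff_ge (ha : 0 < a) (hb : 0 < b)
    (hS : ∀ x, x ∈ A → x + a ∈ A → x + a + b ∉ A) :
    2 * ((Set.Icc (t + 1) (t + 2 * a + b) \ A).ncard : ℤ) +
      ((Set.Icc (t + a + b + 1) (t + 3 * a + 2 * b) \ A).ncard : ℤ) ≥ 2 * a + b := by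
  classical
  set J := Finset.Icc (t + 1) (t + 2 * a + b)
  set Y := {y ∈ Finset.Icc (t + 1) (t + 3 * a + 2 * b) | y ∉ A}
  have hmaps : Set.MapsTo (gapChoice A a b t) J Y := fun m hm =>
    Finset.mem_filter.mpr ⟨gapChoice_mem_Icc ha hb hm, gapChoice_notMem hS⟩
  have hcount : #J ≤ 2 * #{y ∈ Y | y ≤ t + 2 * a + b} + #{y ∈ Y | t + a + b < y} :=
    calc #J = ∑ y ∈ Y, #{m ∈ J | gapChoice A a b t m = y} :=
          Finset.card_eq_sum_card_fiberwise hmaps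
      _ ≤ ∑ y ∈ Y, ((if y ≤ t + 2 * a + b then 2 else 0) + (if t + a + b < y then 1 else 0)) :=
          Finset.sum_le_sum fun y _ => card_gapChoice_fiber_le ha hb
      _ = 2 * #{y ∈ Y | y ≤ t + 2 * a + b} + #{y ∈ Y | t + a + b < y} := by
          simp [Finset.sum_add_distrib, Finset.sum_ite, mul_comm]
  have hJ : (#J : ℤ) = 2 * a + b := by
    rw [Int.card_Icc, Int.toNat_of_nonneg (by omega)]; ring
  have e₁ : Set.Icc (t + 1) (t + 2 * a + b) \ A = ↑{y ∈ Y | y ≤ t + 2 * a + b} := by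
    ext; simp only [Y, Set.mem_sdiff, Set.mem_Icc, Finset.coe_filter, Set.mem_ofPred_eq]; grind
  have e₂ : Set.Icc (t + a + b + 1) (t + 3 * a + 2 * b) \ A = ↑{y ∈ Y | t + a + b < y} := by
    ext; simp only [Y, Set.mem_sdiff, Set.mem_Icc, Finset.coe_filter, Set.mem_ofPred_eq]; grind
  rw [e₁, e₂, Set.ncard_coe_finset, Set.ncard_coe_finset]
  omega

end GapChoice

theorem stmt6_general (l1 l2 : ℤ) (h1 : 0 < l1) (h2 : 0 < l2) (A : Set ℤ)
    (hA : SFree ({0, l1, l1 + l2} : Set ℤ) A) (t : ℤ) :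
    2 * ((Set.Icc (t + 1) (t + 2 * l1 + l2) \ A).ncard : ℤ) +
      ((Set.Icc (t + l1 + l2 + 1) (t + 3 * l1 + 2 * l2) \ A).ncard : ℤ) ≥ 2 * l1 + l2 :=
  two_mul_ncard_Icc_diff_add_ncard_Icc_diff_ge h1 h2 fun _ => hA.add_add_notMem

theorem stmt6 (l1 l2 : ℤ) (h1 : 0 < l1) (h2 : 0 < l2) (hco : Int.gcd l1 l2 = 1)
    (hmod : l1 % 3 = (l2 + 1) % 3) (A : Set ℤ)
    (hA : SFree ({0, l1, l1 + l2} : Set ℤ) A) (t : ℤ) :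
    2 * ((Set.Icc (t + 1) (t + 2 * l1 + l2) \ A).ncard : ℤ) +
      ((Set.Icc (t + l1 + l2 + 1) (t + 3 * l1 + 2 * l2) \ A).ncard : ℤ) ≥ 2 * l1 + l2 :=
  stmt6_general l1 l2 h1 h2 A hA t
end

section
/- Let λ₁, λ₂ be coprime positive integers with λ₁ ≡ λ₂ + 1 (mod 3), S = {0, λ₁, λ₁+λ₂}, and A ⊆ ℤ an S-free set. For every t ∈ ℤ, with I₁(t) = {t+1, ..., t+2λ₁+λ₂} and I₂(t) = {t+λ₁+λ₂+1, ..., t+3λ₁+2λ₂}, at least one of the following holds: |A ∩ I₁(t)| ≤ ⌊(2/3)(2λ₁+λ₂)⌋, or |A ∩ I₁(t)| + |A ∩ I₂(t)| ≤ 2⌊(2/3)(2λ₁+λ₂)⌋. -/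
open Filter Set

/-- Key counting lemma: for an `S`-free set `A` with `S = {0, l1, l1+l2}`,
any window of length `2*l1+l2` counted twice plus the window shifted by `l1+l2`
contains at most `2*(2*l1+l2)` elements of `A`. -/
lemma key_count (l1 l2 : ℤ) (h1 : 0 < l1) (h2 : 0 < l2) (A : Set ℤ)
    (hA : SFree ({0, l1, l1 + l2} : Set ℤ) A) (t : ℤ) :
    2 * ((A ∩ Set.Icc (t + 1) (t + 2 * l1 + l2)).ncard : ℤ) +
      ((A ∩ Set.Icc (t + l1 + l2 + 1) (t + 3 * l1 + 2 * l2)).ncard : ℤ) ≤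
      2 * (2 * l1 + l2) := by
  classical
  -- the basic consequence of freeness
  have hfree : ∀ m : ℤ, m ∈ A → m + l1 ∈ A → m + (l1 + l2) ∉ A := by
    intro m hm hm1 hm2
    refine hA m ?_
    intro y hy
    simp only [translateSet, Set.mem_image, Set.mem_insert_iff,
      Set.mem_singleton_iff] at hy
    obtain ⟨s, hs, rfl⟩ := hy
    rcases hs with rfl | rfl | rfl
    · simpa using hm
    · rwa [add_comm]
    · rwa [add_comm]
  set X : Finset ℤ := Finset.Icc (t + 1) (t + 2 * l1 + l2) with hXdef
  set Y : Finset ℤ := Finset.Icc (t + l1 + l2 + 1) (t + 3 * l1 + 2 * l2) with hYdef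
  set U : Finset ℤ := Finset.Icc (t + 1) (t + 3 * l1 + 2 * l2) with hUdef
  set Bf : Finset ℤ := U.filter (fun y => y ∉ A) with hBdef
  set φ : ℤ → ℤ :=
    fun x => if x ∈ A then (if x + l1 ∈ A then x + (l1 + l2) else x + l1) else x with hphidef
  have hphi_cases : ∀ x : ℤ, φ x = x ∨ φ x = x + l1 ∨ φ x = x + (l1 + l2) := by
    intro x
    simp only [hphidef]
    split_ifs <;> tauto
  have hphi_notA : ∀ x : ℤ, φ x ∉ A := by
    intro x
    simp only [hphidef]
    split_ifs with h h'
    · exact hfree x h h'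
    · exact h'
    · exact h
  have hchar3 : ∀ x : ℤ, φ x = x + (l1 + l2) → x ∈ A ∧ x + l1 ∈ A := by
    intro x
    simp only [hphidef]
    split_ifs with h h' <;> intro e
    · exact ⟨h, h'⟩
    · exact absurd e (by omega)
    · exact absurd e (by omega)
  have hchar2 : ∀ x : ℤ, φ x = x + l1 → x ∈ A := by
    intro x
    simp only [hphidef]
    split_ifs with h h' <;> intro e
    · exact absurd e (by omega)
    · exact h
    · exact absurd e (by omega)
  have hmaps : ∀ x ∈ X, φ x ∈ Bf := by
    intro x hx
    rw [hXdef, Finset.mem_Icc] at hx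
    rw [hBdef, Finset.mem_filter, hUdef, Finset.mem_Icc]
    refine ⟨?_, hphi_notA x⟩
    rcases hphi_cases x with e | e | e <;> rw [e] <;> constructor <;> omega
  have hfib : X.card = ∑ y ∈ Bf, (X.filter (fun x => φ x = y)).card :=
    Finset.card_eq_sum_card_fiberwise hmaps
  set mult : ℤ → ℕ := fun y => (X.filter (fun x => φ x = y)).card with hmultdef
  have hmult_eq : ∀ y : ℤ, mult y = (X.filter (fun x => φ x = y)).card := by
    intro y; rw [hmultdef]
  have hfib_mem : ∀ y x : ℤ, x ∈ X.filter (fun x => φ x = y) →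
      ((t + 1 ≤ x ∧ x ≤ t + 2 * l1 + l2) ∧ (x = y ∨ x = y - l1 ∨ x = y - (l1 + l2))) := by
    intro y x hx
    rw [Finset.mem_filter] at hx
    obtain ⟨hx1, hx2⟩ := hx
    rw [hXdef, Finset.mem_Icc] at hx1
    refine ⟨hx1, ?_⟩
    rcases hphi_cases x with e | e | e <;> rw [e] at hx2 <;> omega
  have pair_le : ∀ a b : ℤ, ({a, b} : Finset ℤ).card ≤ 2 := by
    intro a b
    simpa using Finset.card_insert_le a ({b} : Finset ℤ)
  have hmult3 : ∀ y : ℤ, mult y ≤ 3 := by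
    intro y
    have hsub : X.filter (fun x => φ x = y) ⊆ ({y, y - l1, y - (l1 + l2)} : Finset ℤ) := by
      intro x hx
      have h := (hfib_mem y x hx).2
      simp only [Finset.mem_insert, Finset.mem_singleton]
      tauto
    have h1' := Finset.card_le_card hsub
    have e1 := Finset.card_insert_le y ({y - l1, y - (l1 + l2)} : Finset ℤ)
    have e2 := pair_le (y - l1) (y - (l1 + l2))
    rw [hmult_eq]
    omega
  have hmultL : ∀ y : ℤ, y ≤ t + l1 + l2 → mult y ≤ 2 := by
    intro y hy
    have hsub : X.filter (fun x => φ x = y) ⊆ ({y, y - l1} : Finset ℤ) := by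
      intro x hx
      have h := hfib_mem y x hx
      simp only [Finset.mem_insert, Finset.mem_singleton]
      omega
    have h1' := Finset.card_le_card hsub
    have e2 := pair_le y (y - l1)
    rw [hmult_eq]
    omega
  have hmultR : ∀ y : ℤ, t + 2 * l1 + l2 + 1 ≤ y → mult y ≤ 2 := by
    intro y hy
    have hsub : X.filter (fun x => φ x = y) ⊆ ({y - l1, y - (l1 + l2)} : Finset ℤ) := by
      intro x hx
      have h := hfib_mem y x hx
      simp only [Finset.mem_insert, Finset.mem_singleton]
      omega
    have h1' := Finset.card_le_card hsub
    have e2 := pair_le (y - l1) (y - (l1 + l2))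
    rw [hmult_eq]
    omega
  -- structure of doubly-hit points on the right
  have hstr : ∀ y : ℤ, y ∈ Bf → t + 2 * l1 + l2 + 1 ≤ y → 2 ≤ mult y →
      (y - (2 * l1 + l2)) ∈ Bf ∧ mult (y - (2 * l1 + l2)) = 1 ∧
        t + 1 ≤ y - (2 * l1 + l2) ∧ y - (2 * l1 + l2) ≤ t + l1 := by
    intro y hy hylb hym
    have hsub : X.filter (fun x => φ x = y) ⊆ ({y - l1, y - (l1 + l2)} : Finset ℤ) := by
      intro x hx
      have h := hfib_mem y x hx
      simp only [Finset.mem_insert, Finset.mem_singleton]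
      omega
    have heq : X.filter (fun x => φ x = y) = ({y - l1, y - (l1 + l2)} : Finset ℤ) := by
      apply Finset.eq_of_subset_of_card_le hsub
      have e2 := pair_le (y - l1) (y - (l1 + l2))
      rw [hmult_eq] at hym
      omega
    have hmem1 : y - l1 ∈ X.filter (fun x => φ x = y) := by rw [heq]; simp
    have hmem2 : y - (l1 + l2) ∈ X.filter (fun x => φ x = y) := by rw [heq]; simp
    have hb1 := hfib_mem y (y - l1) hmem1
    have hphi1 : φ (y - l1) = y := (Finset.mem_filter.mp hmem1).2
    have hphi2 : φ (y - (l1 + l2)) = y := (Finset.mem_filter.mp hmem2).2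
    have hA2 : y - l1 ∈ A := by
      apply hchar2 (y - l1)
      rw [show y - l1 + l1 = y by ring]
      exact hphi1
    have hA0 : y - (l1 + l2) ∈ A ∧ y - (l1 + l2) + l1 ∈ A := by
      apply hchar3 (y - (l1 + l2))
      rw [show y - (l1 + l2) + (l1 + l2) = y by ring]
      exact hphi2
    set w : ℤ := y - (2 * l1 + l2) with hwdef
    have hwb : t + 1 ≤ w ∧ w ≤ t + l1 := by
      constructor <;> omega
    have hwA : w ∉ A := by
      intro hwA
      have hw1 : w + l1 ∈ A := by
        rw [show w + l1 = y - (l1 + l2) by rw [hwdef]; ring]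
        exact hA0.1
      have := hfree w hwA hw1
      apply this
      rw [show w + (l1 + l2) = y - l1 by rw [hwdef]; ring]
      exact hA2
    have hphiw : φ w = w := by
      simp only [hphidef]
      rw [if_neg hwA]
    have hfw : X.filter (fun x => φ x = w) = ({w} : Finset ℤ) := by
      apply Finset.ext
      intro x
      simp only [Finset.mem_filter, Finset.mem_singleton]
      constructor
      · intro hx
        have h := hfib_mem w x (Finset.mem_filter.mpr hx)
        omega
      · intro hx
        subst hx
        refine ⟨?_, hphiw⟩
        rw [hXdef, Finset.mem_Icc]
        omega
    have hmw : mult w = 1 := by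
      rw [hmult_eq, hfw, Finset.card_singleton]
    have hwBf : w ∈ Bf := by
      rw [hBdef, Finset.mem_filter, hUdef, Finset.mem_Icc]
      exact ⟨⟨by omega, by omega⟩, hwA⟩
    exact ⟨hwBf, hmw, hwb.1, hwb.2⟩
  set X2 : Finset ℤ := Bf.filter (fun y => t + 2 * l1 + l2 + 1 ≤ y ∧ 2 ≤ mult y) with hX2def
  set W2 : Finset ℤ := X2.image (fun y => y - (2 * l1 + l2)) with hW2def
  have hW2card : W2.card = X2.card := by
    rw [hW2def]
    apply Finset.card_image_of_injOn
    intro a _ b _ hab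
    have : a - (2 * l1 + l2) = b - (2 * l1 + l2) := hab
    omega
  have hW2prop : ∀ y ∈ W2, mult y = 1 ∧ y ∈ Bf ∧ t + 1 ≤ y ∧ y ≤ t + l1 := by
    intro y hy
    rw [hW2def, Finset.mem_image] at hy
    obtain ⟨z, hz, rfl⟩ := hy
    rw [hX2def, Finset.mem_filter] at hz
    obtain ⟨hz1, hz2, hz3⟩ := hz
    obtain ⟨w1, w2, w3, w4⟩ := hstr z hz1 hz2 hz3
    exact ⟨w2, w1, w3, w4⟩
  have hW2sub : W2 ⊆ Bf := by
    intro y hy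
    exact (hW2prop y hy).2.1
  have hX2sub : X2 ⊆ Bf := by
    rw [hX2def]; exact Finset.filter_subset _ _
  -- pointwise inequality
  have hpoint : ∀ y ∈ Bf,
      (mult y : ℤ) + (if y ∈ W2 then 1 else 0) ≤
        (if y ∈ X then 2 else 0) + (if y ∈ Y then 1 else 0) + (if y ∈ X2 then 1 else 0) := by
    intro y hy
    have hyU : t + 1 ≤ y ∧ y ≤ t + 3 * l1 + 2 * l2 := by
      have h := hy
      rw [hBdef, Finset.mem_filter, hUdef, Finset.mem_Icc] at h
      exact h.1
    have hXiff : y ∈ X ↔ y ≤ t + 2 * l1 + l2 := by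
      rw [hXdef, Finset.mem_Icc]
      omega
    have hYiff : y ∈ Y ↔ t + l1 + l2 + 1 ≤ y := by
      rw [hYdef, Finset.mem_Icc]
      omega
    by_cases hx2 : y ∈ X2
    · have hx2' := hx2
      rw [hX2def, Finset.mem_filter] at hx2'
      obtain ⟨-, hge, hm2'⟩ := hx2'
      have hm2 := hmultR y hge
      have hnW2 : y ∉ W2 := by
        intro hw
        have := (hW2prop y hw).2.2.2
        omega
      rw [if_pos hx2, if_neg hnW2, if_neg (by rw [hXiff]; omega), if_pos (by rw [hYiff]; omega)]
      omega
    · by_cases hw2 : y ∈ W2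
      · have hp := hW2prop y hw2
        have hnX2 : y ∉ X2 := hx2
        rw [if_pos hw2, if_neg hnX2, if_pos (by rw [hXiff]; omega)]
        have h1' := hp.1
        split_ifs <;> omega
      · rw [if_neg hw2, if_neg hx2]
        by_cases hL : y ≤ t + l1 + l2
        · have hm2 := hmultL y hL
          rw [if_pos (by rw [hXiff]; omega)]
          split_ifs <;> omega
        · by_cases hXc : y ≤ t + 2 * l1 + l2
          · have hm3 := hmult3 y
            rw [if_pos (by rw [hXiff]; omega), if_pos (by rw [hYiff]; omega)]
            omega
          · have hge : t + 2 * l1 + l2 + 1 ≤ y := by omega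
            have hm1 : ¬ (2 ≤ mult y) := by
              intro h2m
              exact hx2 (by rw [hX2def, Finset.mem_filter]; exact ⟨hy, hge, h2m⟩)
            rw [if_neg (by rw [hXiff]; omega), if_pos (by rw [hYiff]; omega)]
            omega
  have hsum := Finset.sum_le_sum hpoint
  rw [Finset.sum_add_distrib] at hsum
  rw [Finset.sum_add_distrib, Finset.sum_add_distrib] at hsum
  have hsum1 : (∑ y ∈ Bf, (mult y : ℤ)) = (X.card : ℤ) := by
    rw [hfib]
    push_cast
    apply Finset.sum_congr rfl
    intro y _
    rw [hmult_eq]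
  have hsum2 : (∑ y ∈ Bf, (if y ∈ W2 then (1 : ℤ) else 0)) = (W2.card : ℤ) := by
    rw [Finset.sum_ite_mem, Finset.inter_eq_right.mpr hW2sub, Finset.sum_const]
    simp
  have hsum3 : (∑ y ∈ Bf, (if y ∈ X2 then (1 : ℤ) else 0)) = (X2.card : ℤ) := by
    rw [Finset.sum_ite_mem, Finset.inter_eq_right.mpr hX2sub, Finset.sum_const]
    simp
  have hsum4 : (∑ y ∈ Bf, (if y ∈ X then (2 : ℤ) else 0)) = 2 * ((Bf ∩ X).card : ℤ) := by
    rw [Finset.sum_ite_mem, Finset.sum_const]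
    simp [mul_comm]
  have hsum5 : (∑ y ∈ Bf, (if y ∈ Y then (1 : ℤ) else 0)) = ((Bf ∩ Y).card : ℤ) := by
    rw [Finset.sum_ite_mem, Finset.sum_const]
    simp
  rw [hsum1, hsum2, hsum3, hsum4, hsum5] at hsum
  -- identify the intersections with filters
  have hBX : Bf ∩ X = X.filter (fun y => y ∉ A) := by
    ext y
    rw [Finset.mem_inter, hBdef, Finset.mem_filter, Finset.mem_filter, hUdef,
      Finset.mem_Icc, hXdef, Finset.mem_Icc]
    constructor
    · rintro ⟨⟨_, hnA⟩, hyX⟩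
      exact ⟨hyX, hnA⟩
    · rintro ⟨hyX, hnA⟩
      exact ⟨⟨by omega, hnA⟩, hyX⟩
  have hBY : Bf ∩ Y = Y.filter (fun y => y ∉ A) := by
    ext y
    rw [Finset.mem_inter, hBdef, Finset.mem_filter, Finset.mem_filter, hUdef,
      Finset.mem_Icc, hYdef, Finset.mem_Icc]
    constructor
    · rintro ⟨⟨_, hnA⟩, hyY⟩
      exact ⟨hyY, hnA⟩
    · rintro ⟨hyY, hnA⟩
      exact ⟨⟨by omega, hnA⟩, hyY⟩
  rw [hBX, hBY] at hsum
  have hXsplit := Finset.card_filter_add_card_filter_not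
    (s := X) (p := fun y => y ∈ A)
  have hYsplit := Finset.card_filter_add_card_filter_not
    (s := Y) (p := fun y => y ∈ A)
  have hXcardEq : (X.card : ℤ) = 2 * l1 + l2 := by
    rw [hXdef, Int.card_Icc]
    rw [show t + 2 * l1 + l2 + 1 - (t + 1) = 2 * l1 + l2 by ring]
    rw [Int.toNat_of_nonneg (by omega)]
  have hYcardEq : (Y.card : ℤ) = 2 * l1 + l2 := by
    rw [hYdef, Int.card_Icc]
    rw [show t + 3 * l1 + 2 * l2 + 1 - (t + l1 + l2 + 1) = 2 * l1 + l2 by ring]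
    rw [Int.toNat_of_nonneg (by omega)]
  -- convert the ncards in the goal
  have hncard1 : (A ∩ Set.Icc (t + 1) (t + 2 * l1 + l2)).ncard
      = (X.filter (fun y => y ∈ A)).card := by
    rw [show A ∩ Set.Icc (t + 1) (t + 2 * l1 + l2)
        = ((X.filter (fun y => y ∈ A) : Finset ℤ) : Set ℤ) from ?_, Set.ncard_coe_finset]
    ext y
    simp only [Set.mem_inter_iff, Set.mem_Icc, Finset.coe_filter, Set.mem_setOf_eq,
      hXdef, Finset.mem_Icc]
    tauto
  have hncard2 : (A ∩ Set.Icc (t + l1 + l2 + 1) (t + 3 * l1 + 2 * l2)).ncard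
      = (Y.filter (fun y => y ∈ A)).card := by
    rw [show A ∩ Set.Icc (t + l1 + l2 + 1) (t + 3 * l1 + 2 * l2)
        = ((Y.filter (fun y => y ∈ A) : Finset ℤ) : Set ℤ) from ?_, Set.ncard_coe_finset]
    ext y
    simp only [Set.mem_inter_iff, Set.mem_Icc, Finset.coe_filter, Set.mem_setOf_eq,
      hYdef, Finset.mem_Icc]
    tauto
  rw [hncard1, hncard2]
  omega

theorem stmt7 (l1 l2 : ℤ) (h1 : 0 < l1) (h2 : 0 < l2) (hco : Int.gcd l1 l2 = 1)
    (hmod : l1 % 3 = (l2 + 1) % 3) (A : Set ℤ)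
    (hA : SFree ({0, l1, l1 + l2} : Set ℤ) A) (t : ℤ) :
    ((A ∩ Set.Icc (t + 1) (t + 2 * l1 + l2)).ncard : ℤ) ≤ ⌊(2 : ℝ) / 3 * (2 * l1 + l2)⌋ ∨
    ((A ∩ Set.Icc (t + 1) (t + 2 * l1 + l2)).ncard : ℤ) +
      ((A ∩ Set.Icc (t + l1 + l2 + 1) (t + 3 * l1 + 2 * l2)).ncard : ℤ) ≤
        2 * ⌊(2 : ℝ) / 3 * (2 * l1 + l2)⌋ := by
  obtain ⟨k, hk⟩ : ∃ k : ℤ, 2 * l1 + l2 = 3 * k - 1 := ⟨(2 * l1 + l2 + 1) / 3, by omega⟩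
  have hfl : ⌊(2 : ℝ) / 3 * (2 * (l1 : ℝ) + (l2 : ℝ))⌋ = 2 * k - 1 := by
    have hcast : 2 * (l1 : ℝ) + (l2 : ℝ) = 3 * (k : ℝ) - 1 := by
      have := congrArg (fun z : ℤ => (z : ℝ)) hk
      push_cast at this
      linarith
    rw [Int.floor_eq_iff]
    constructor
    · push_cast
      linarith
    · push_cast
      linarith
  have hkey := key_count l1 l2 h1 h2 A hA t
  by_cases hc : ((A ∩ Set.Icc (t + 1) (t + 2 * l1 + l2)).ncard : ℤ) ≤ 2 * k - 1
  · left
    rw [hfl]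
    exact hc
  · right
    rw [hfl]
    omega
end

section
/- Let λ₁, λ₂ be coprime positive integers and S = {0, λ₁, λ₁+λ₂}. Then the maximum packing density satisfies d_p(S) = max( ⌊(1/3)(λ₁+2λ₂)⌋/(λ₁+2λ₂), ⌊(1/3)(2λ₁+λ₂)⌋/(2λ₁+λ₂) ). -/
open Filter Set

/-!
A set `A` is `{0, a, a + b}`-packing iff no two of its elements differ by `a`, `b` or `a + b`,
i.e. iff `A` meets every translate of `{0, a, a + b}` and of `{0, b, a + b}` at most once. The
points of the two windows `[z, z + a + 2b)` and `[z, z + 2a + b)`, counted with multiplicity, can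
be sent injectively into a family of `a + b` such translates, each point to a translate containing
it; hence the two windows hold at most `a + b` points of `A` together. Since
`⌊(a + 2b)/3⌋ + ⌊(2a + b)/3⌋ ≥ a + b - 1`, one of the two windows at `z` has density at most the
claimed maximum `q`, and tiling `ℤ` greedily by such windows bounds the density of `A` by `q`.

Conversely, for coprime `a, b` the residues `3bj` modulo `n = a + 2b`, `0 ≤ j < ⌊n/3⌋`, form a
packing of density `⌊n/3⌋/n`: modulo `n` the forbidden differences are `-2b`, `b`, `-b`, never
`b` times a multiple of `3` smaller than `n` in absolute value. Swapping `a` and `b` gives the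
other term of the maximum.
-/

open Finset in
open scoped Classical in
noncomputable def windowCard (A : Set ℤ) (s t : ℤ) : ℕ := #{x ∈ Finset.Ico s t | x ∈ A}

section Window

variable {A : Set ℤ}

open scoped Classical in
lemma windowCard_add {s u t : ℤ} (hsu : s ≤ u) (hut : u ≤ t) :
    windowCard A s u + windowCard A u t = windowCard A s t := by
  rw [windowCard, windowCard, windowCard, ← Finset.card_union_of_disjoint
    (Finset.disjoint_filter_filter (Finset.Ico_disjoint_Ico_consecutive s u t)),
    ← Finset.filter_union, Finset.Ico_union_Ico_eq_Ico hsu hut]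

open scoped Classical in
lemma windowCard_le (s t : ℤ) : windowCard A s t ≤ (t - s).toNat :=
  (Finset.card_filter_le _ _).trans (Int.card_Ico s t).le

lemma ncard_inter_Icc_eq_windowCard (n : ℤ) :
    (A ∩ Set.Icc (-n) n).ncard = windowCard A (-n) (n + 1) := by
  classical
  rw [windowCard, ← Set.ncard_coe_finset, Finset.coe_filter]
  congr 1
  ext x
  simp only [Set.mem_inter_iff, Set.mem_Icc, Finset.mem_Ico, Set.mem_ofPred_eq,
    Int.lt_add_one_iff]
  tauto

/-- Greedy tiling of `[t, e)` by such windows; the last, incomplete one costs at most `ℓ`. -/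
lemma windowCard_le_of_forall_exists {q : ℝ} {ℓ : ℤ} (hq : 0 ≤ q)
    (h : ∀ z, ∃ m, 0 < m ∧ m ≤ ℓ ∧ (windowCard A z (z + m) : ℝ) ≤ q * m) {t e : ℤ}
    (hte : t ≤ e) : (windowCard A t e : ℝ) ≤ q * (e - t) + ℓ := by
  induction hn : (e - t).toNat using Nat.strong_induction_on generalizing t with
  | _ n ih =>
  obtain ⟨m, hm, hmℓ, hwindow⟩ := h t
  by_cases hme : t + m ≤ e
  · have hrest := ih (e - (t + m)).toNat (by omega) (by omega) rfl
    rw [← windowCard_add (by omega : t ≤ t + m) hme]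
    push_cast at hrest ⊢
    linarith
  · have hshort : (windowCard A t e : ℤ) ≤ ℓ := by
      have := windowCard_le (A := A) t e
      omega
    have hshort' : (windowCard A t e : ℝ) ≤ ℓ := by exact_mod_cast hshort
    have hte' : (t : ℝ) ≤ e := by exact_mod_cast hte
    nlinarith

lemma mul_le_windowCard_of_forall {k n : ℤ} (hn : 0 ≤ n) (h : ∀ s, k ≤ windowCard A s (s + n))
    (t : ℤ) : ∀ j : ℕ, j * k ≤ windowCard A t (t + n * j)
  | 0 => by simp
  | j + 1 => by
    rw [show t + n * ((j + 1 : ℕ) : ℤ) = t + n * j + n by push_cast; ring,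
      ← windowCard_add (u := t + n * j) (le_add_of_nonneg_right (by positivity)) (by omega)]
    have := mul_le_windowCard_of_forall hn h t j
    have := h (t + n * j)
    push_cast
    linarith

end Window

lemma tendsto_add_div_two_mul_add_one (q c : ℝ) :
    Tendsto (fun N : ℕ => q + c / (2 * N + 1)) atTop (nhds q) := by
  have hden : Tendsto (fun N : ℕ => 2 * (N : ℝ) + 1) atTop atTop :=
    tendsto_atTop_add_const_right _ _
      (tendsto_natCast_atTop_atTop.const_mul_atTop two_pos)
  simpa using tendsto_const_nhds.add (tendsto_const_nhds.div_atTop hden)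

section Density

variable {A : Set ℤ}

lemma upperDensity_le_of_windowCard_le {q c : ℝ}
    (h : ∀ N : ℕ, (windowCard A (-N) (N + 1) : ℝ) ≤ q * (2 * N + 1) + c) :
    upperDensity A ≤ q := by
  rw [upperDensity, ← (tendsto_add_div_two_mul_add_one q c).limsup_eq]
  refine limsup_le_limsup (Eventually.of_forall fun N => ?_)
    (isCoboundedUnder_le_of_le atTop (x := 0) fun N => by positivity)
    (tendsto_add_div_two_mul_add_one q c).isBoundedUnder_le
  dsimp only
  rw [ncard_inter_Icc_eq_windowCard, div_le_iff₀ (by positivity), add_mul,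
    div_mul_cancel₀ _ (by positivity)]
  exact_mod_cast h N

lemma le_upperDensity_of_le_windowCard {q c : ℝ}
    (h : ∀ N : ℕ, q * (2 * N + 1) - c ≤ windowCard A (-N) (N + 1)) :
    q ≤ upperDensity A := by
  have hbdd : ∀ N : ℕ, (windowCard A (-N) (N + 1) : ℝ) ≤ 2 * N + 1 := by
    intro N
    have := windowCard_le (A := A) (-N) (N + 1)
    have : windowCard A (-N) (N + 1) ≤ 2 * N + 1 := by omega
    exact_mod_cast this
  rw [upperDensity, ← (tendsto_add_div_two_mul_add_one q (-c)).limsup_eq]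
  refine limsup_le_limsup (Eventually.of_forall fun N => ?_)
    (tendsto_add_div_two_mul_add_one q (-c)).isBoundedUnder_ge.isCoboundedUnder_le
    (isBoundedUnder_of ⟨1, fun N => ?_⟩)
  · dsimp only
    rw [ncard_inter_Icc_eq_windowCard, le_div_iff₀ (by positivity), add_mul,
      div_mul_cancel₀ _ (by positivity)]
    linarith [h N]
  · rw [ncard_inter_Icc_eq_windowCard, div_le_one (by positivity)]
    exact hbdd N

lemma upperDensity_le_of_forall_exists_window {q : ℝ} {ℓ : ℤ} (hq : 0 ≤ q)
    (h : ∀ z, ∃ m, 0 < m ∧ m ≤ ℓ ∧ (windowCard A z (z + m) : ℝ) ≤ q * m) :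
    upperDensity A ≤ q :=
  upperDensity_le_of_windowCard_le (c := ℓ) fun N => by
    have := windowCard_le_of_forall_exists hq h (t := -N) (e := N + 1) (by omega)
    push_cast at this
    linarith

lemma le_upperDensity_of_forall_window {k n : ℤ} (hk : 0 ≤ k) (hn : 0 < n)
    (h : ∀ s, k ≤ windowCard A s (s + n)) : (k : ℝ) / n ≤ upperDensity A := by
  refine le_upperDensity_of_le_windowCard (c := k) fun N => ?_
  obtain ⟨j, hj⟩ : ∃ j : ℕ, (j : ℤ) = (2 * N + 1) / n :=
    ⟨_, Int.toNat_of_nonneg (Int.ediv_nonneg (by positivity) hn.le)⟩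
  have hdiv := Int.emod_add_mul_ediv (2 * N + 1) n
  have hmod := Int.emod_lt_of_pos (2 * N + 1) hn
  rw [← hj] at hdiv
  have hcount : j * k ≤ windowCard A (-N) (N + 1) := by
    have := windowCard_add (A := A) (s := -N) (u := -N + n * j) (t := N + 1)
      (by simp; positivity) (by linarith [Int.emod_nonneg (2 * N + 1) hn.ne'])
    have := mul_le_windowCard_of_forall hn.le h (-N) j
    omega
  have hlt : (2 * N + 1 : ℝ) < n * (j + 1) := by
    have : 2 * N + 1 < n * (j + 1) := by linarith
    exact_mod_cast this
  have hcount' : (j * k : ℝ) ≤ windowCard A (-N) (N + 1) := by exact_mod_cast hcount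
  have hk' : (0 : ℝ) ≤ k := by exact_mod_cast hk
  rw [div_mul_eq_mul_div, div_sub' (by positivity), div_le_iff₀ (by positivity)]
  nlinarith

end Density

def AvoidsDifferences (a b : ℤ) (A : Set ℤ) : Prop :=
  ∀ x ∈ A, ∀ y ∈ A, x - y ≠ a ∧ x - y ≠ b ∧ x - y ≠ a + b

lemma AvoidsDifferences.symm {a b : ℤ} {A : Set ℤ} (h : AvoidsDifferences a b A) :
    AvoidsDifferences b a A := fun x hx y hy => by
  have := h x hx y hy
  omega

lemma sPacking_iff_avoidsDifferences {a b : ℤ} (ha : 0 < a) (hb : 0 < b) {A : Set ℤ} :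
    SPacking {0, a, a + b} A ↔ AvoidsDifferences a b A := by
  simp only [SPacking, AvoidsDifferences, Set.disjoint_left, translateSet]
  simp only [Set.mem_image, Set.mem_insert_iff, Set.mem_singleton_iff, exists_eq_or_imp,
    exists_eq_left]
  constructor
  · intro hP x hx y hy
    rcases eq_or_ne x y with rfl | hne
    · omega
    exact ⟨fun _ => hP x hx y hy hne (.inl rfl) (.inr (.inl (by omega))),
      fun _ => hP x hx y hy hne (.inr (.inl rfl)) (.inr (.inr (by omega))),
      fun _ => hP x hx y hy hne (.inl rfl) (.inr (.inr (by omega)))⟩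
  · intro hA x hx y hy _ w hwx hwy
    have := hA x hx y hy
    have := hA y hy x hx
    omega

section TwoWindows

variable (a b z : ℤ)

/- `tripleIndex₁` (resp. `tripleIndex₂`) picks for each point of `[z, z + a + 2b)`
(resp. `[z, z + 2a + b)`) a triple containing it. When `b ≤ a` all picked triples lie among the
`a + b` triples `inl x`, `x ∈ [z, z + b)`, and `inr x`, `x ∈ [z, z + a)`. -/
def triple : ℤ ⊕ ℤ → Finset ℤ
  | .inl x => {x, x + a, x + a + b}
  | .inr x => {x, x + b, x + b + a}

def tripleIndex₁ (y : ℤ) : ℤ ⊕ ℤ :=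
  if y < z + b then .inl y else if y < z + a then .inr y
  else if y < z + a + b then .inl (y - a) else .inl (y - a - b)

def tripleIndex₂ (y : ℤ) : ℤ ⊕ ℤ :=
  if y < z + b then .inr y else if y < z + a + b then .inr (y - b) else .inr (y - a - b)

variable {a b z}

lemma mem_triple_tripleIndex₁ (y : ℤ) : y ∈ triple a b (tripleIndex₁ a b z y) := by
  unfold tripleIndex₁
  split_ifs <;> simp only [triple, Finset.mem_insert, Finset.mem_singleton, true_or] <;> omega

lemma mem_triple_tripleIndex₂ (y : ℤ) : y ∈ triple a b (tripleIndex₂ a b z y) := by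
  unfold tripleIndex₂
  split_ifs <;> simp only [triple, Finset.mem_insert, Finset.mem_singleton, true_or] <;> omega

lemma tripleIndex₁_mem {y : ℤ} (hzy : z ≤ y) (hy : y < z + (a + 2 * b)) :
    tripleIndex₁ a b z y ∈ (Finset.Ico z (z + b)).disjSum (Finset.Ico z (z + a)) := by
  unfold tripleIndex₁
  split_ifs <;> simp only [Finset.inl_mem_disjSum, Finset.inr_mem_disjSum, Finset.mem_Ico] <;> omega

lemma tripleIndex₂_mem (hba : b ≤ a) {y : ℤ} (hzy : z ≤ y) (hy : y < z + (2 * a + b)) :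
    tripleIndex₂ a b z y ∈ (Finset.Ico z (z + b)).disjSum (Finset.Ico z (z + a)) := by
  unfold tripleIndex₂
  split_ifs <;> simp only [Finset.inr_mem_disjSum, Finset.mem_Ico] <;> omega

lemma tripleIndex₁_ne_tripleIndex₂ (hb : 0 < b) (y : ℤ) :
    tripleIndex₁ a b z y ≠ tripleIndex₂ a b z y := by
  unfold tripleIndex₁ tripleIndex₂
  split_ifs <;> simp <;> omega

end TwoWindows

lemma AvoidsDifferences.eq_of_mem_triple {a b : ℤ} {A : Set ℤ} (h : AvoidsDifferences a b A)
    {i : ℤ ⊕ ℤ} {u v : ℤ} (hu : u ∈ triple a b i) (hv : v ∈ triple a b i) (huA : u ∈ A)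
    (hvA : v ∈ A) : u = v := by
  have := h u huA v hvA
  have := h v hvA u huA
  rcases i with x | x <;> simp only [triple, Finset.mem_insert, Finset.mem_singleton] at hu hv <;>
    omega

open scoped Classical in
lemma windowCard_add_windowCard_le_of_le {a b : ℤ} {A : Set ℤ} (hA : AvoidsDifferences a b A)
    (hb : 0 < b) (hba : b ≤ a) (z : ℤ) :
    (windowCard A z (z + (a + 2 * b)) : ℤ) + windowCard A z (z + (2 * a + b)) ≤ a + b := by
  set W₁ := {y ∈ Finset.Ico z (z + (a + 2 * b)) | y ∈ A}
  set W₂ := {y ∈ Finset.Ico z (z + (2 * a + b)) | y ∈ A}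
  set index := Sum.elim (tripleIndex₁ a b z) (tripleIndex₂ a b z)
  have hindex : ∀ p ∈ W₁.disjSum W₂,
      index p ∈ (Finset.Ico z (z + b)).disjSum (Finset.Ico z (z + a)) ∧
        p.elim id id ∈ A ∧ p.elim id id ∈ triple a b (index p) := by
    rintro (y | y) hp <;> simp only [Finset.inl_mem_disjSum, Finset.inr_mem_disjSum, W₁, W₂,
      Finset.mem_filter, Finset.mem_Ico] at hp
    · exact ⟨tripleIndex₁_mem hp.1.1 hp.1.2, hp.2, mem_triple_tripleIndex₁ y⟩
    · exact ⟨tripleIndex₂_mem hba hp.1.1 hp.1.2, hp.2, mem_triple_tripleIndex₂ y⟩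
  have hinj : Set.InjOn index (W₁.disjSum W₂) := by
    intro p hp q hq hpq
    obtain ⟨-, hpA, hpT⟩ := hindex p hp
    obtain ⟨-, hqA, hqT⟩ := hindex q hq
    rw [hpq] at hpT
    have heq := hA.eq_of_mem_triple hpT hqT hpA hqA
    rcases p with y | y <;> rcases q with y' | y' <;> simp only [Sum.elim_inl, Sum.elim_inr,
      id] at heq <;> subst heq
    · rfl
    · exact absurd hpq (tripleIndex₁_ne_tripleIndex₂ hb y)
    · exact absurd hpq.symm (tripleIndex₁_ne_tripleIndex₂ hb y)
    · rfl
  have hcard := Finset.card_le_card_of_injOn index (fun p hp => (hindex p hp).1) hinj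
  rw [Finset.card_disjSum, Finset.card_disjSum, Int.card_Ico, Int.card_Ico] at hcard
  change (W₁.card : ℤ) + W₂.card ≤ a + b
  omega

lemma windowCard_add_windowCard_le {a b : ℤ} {A : Set ℤ} (hA : AvoidsDifferences a b A) (ha : 0 < a)
    (hb : 0 < b) (z : ℤ) :
    (windowCard A z (z + (a + 2 * b)) : ℤ) + windowCard A z (z + (2 * a + b)) ≤ a + b := by
  rcases le_total b a with hba | hab
  · exact windowCard_add_windowCard_le_of_le hA hb hba z
  · have := windowCard_add_windowCard_le_of_le hA.symm ha hab z
    rw [show b + 2 * a = 2 * a + b by ring, show 2 * b + a = a + 2 * b by ring] at this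
    omega

lemma upperDensity_le_of_avoidsDifferences {a b : ℤ} (ha : 0 < a) (hb : 0 < b) {A : Set ℤ}
    (hA : AvoidsDifferences a b A) :
    upperDensity A ≤ max ((((a + 2 * b) / 3 : ℤ) : ℝ) / ((a + 2 * b : ℤ) : ℝ))
      ((((2 * a + b) / 3 : ℤ) : ℝ) / ((2 * a + b : ℤ) : ℝ)) := by
  set q := max ((((a + 2 * b) / 3 : ℤ) : ℝ) / ((a + 2 * b : ℤ) : ℝ))
      ((((2 * a + b) / 3 : ℤ) : ℝ) / ((2 * a + b : ℤ) : ℝ))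
  have hq₁ : (((a + 2 * b) / 3 : ℤ) : ℝ) ≤ q * ((a + 2 * b : ℤ) : ℝ) :=
    (div_le_iff₀ (by exact_mod_cast (by omega : 0 < a + 2 * b))).1 (le_max_left _ _)
  have hq₂ : (((2 * a + b) / 3 : ℤ) : ℝ) ≤ q * ((2 * a + b : ℤ) : ℝ) :=
    (div_le_iff₀ (by exact_mod_cast (by omega : 0 < 2 * a + b))).1 (le_max_right _ _)
  have hq : 0 ≤ q := le_max_of_le_left <| div_nonneg
    (by exact_mod_cast (by omega : 0 ≤ (a + 2 * b) / 3))
    (by exact_mod_cast (by omega : 0 ≤ a + 2 * b))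
  refine upperDensity_le_of_forall_exists_window (ℓ := 2 * a + 2 * b) hq fun z => ?_
  have := windowCard_add_windowCard_le hA ha hb z
  by_cases h₁ : (windowCard A z (z + (a + 2 * b)) : ℤ) ≤ (a + 2 * b) / 3
  · refine ⟨a + 2 * b, by omega, by omega, le_trans ?_ hq₁⟩
    exact_mod_cast h₁
  · have h₂ : (windowCard A z (z + (2 * a + b)) : ℤ) ≤ (2 * a + b) / 3 := by omega
    refine ⟨2 * a + b, by omega, by omega, le_trans ?_ hq₂⟩
    exact_mod_cast h₂

def extremalSet (n b : ℤ) : Set ℤ := {x | ∃ j, 0 ≤ j ∧ j < n / 3 ∧ n ∣ x - 3 * b * j}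

lemma eq_of_dvd_three_mul_sub {n b j j' e : ℤ} (hnb : IsCoprime n b)
    (hj : 0 ≤ j ∧ j < n / 3) (hj' : 0 ≤ j' ∧ j' < n / 3) (he : -2 ≤ e ∧ e ≤ 2)
    (h : n ∣ 3 * b * j - 3 * b * j' - b * e) : j = j' ∧ e = 0 := by
  have hdvd : n ∣ 3 * (j - j') - e := hnb.dvd_of_dvd_mul_left <| by
    rwa [show b * (3 * (j - j') - e) = 3 * b * j - 3 * b * j' - b * e by ring]
  have := Int.eq_zero_of_abs_lt_dvd hdvd (by rw [abs_lt]; omega)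
  omega

lemma avoidsDifferences_extremalSet {a b : ℤ} (hnb : IsCoprime (a + 2 * b) b) :
    AvoidsDifferences a b (extremalSet (a + 2 * b) b) := by
  rintro x ⟨j, hj₀, hj, hx⟩ y ⟨j', hj₀', hj', hy⟩
  have key : ∀ e, -2 ≤ e → e ≤ 2 → a + 2 * b ∣ x - y - b * e → e = 0 := fun e he₁ he₂ hd =>
    (eq_of_dvd_three_mul_sub hnb ⟨hj₀, hj⟩ ⟨hj₀', hj'⟩ ⟨he₁, he₂⟩
      (by rw [show 3 * b * j - 3 * b * j' - b * e = x - y - b * e + (y - 3 * b * j') -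
        (x - 3 * b * j) by ring]; exact dvd_sub (dvd_add hd hy) hx)).2
  refine ⟨fun h => ?_, fun h => ?_, fun h => ?_⟩
  · have := key (-2) (by norm_num) (by norm_num) ⟨1, by rw [h]; ring⟩
    norm_num at this
  · have := key 1 (by norm_num) (by norm_num) ⟨0, by rw [h]; ring⟩
    norm_num at this
  · have := key (-1) (by norm_num) (by norm_num) ⟨1, by rw [h]; ring⟩
    norm_num at this

lemma le_windowCard_extremalSet {n b : ℤ} (hn : 0 < n) (hnb : IsCoprime n b) (s : ℤ) :
    n / 3 ≤ windowCard (extremalSet n b) s (s + n) := by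
  suffices (Finset.Ico 0 (n / 3)).card ≤ windowCard (extremalSet n b) s (s + n) by
    rw [Int.card_Ico] at this
    omega
  refine Finset.card_le_card_of_injOn (fun j => s + (3 * b * j - s) % n) ?_ ?_
  · intro j hj
    rw [Finset.mem_coe, Finset.mem_Ico] at hj
    simp only [Finset.mem_coe, Finset.mem_filter, Finset.mem_Ico]
    refine ⟨⟨by linarith [Int.emod_nonneg (3 * b * j - s) hn.ne'],
      by linarith [Int.emod_lt_of_pos (3 * b * j - s) hn]⟩, j, hj.1, hj.2, ?_⟩
    exact ⟨-((3 * b * j - s) / n), by rw [Int.emod_def]; ring⟩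
  · intro j hj j' hj' hjj
    rw [Finset.mem_coe, Finset.mem_Ico] at hj hj'
    have : (3 * b * j' - s) % n = (3 * b * j - s) % n := by simpa using hjj.symm
    exact (eq_of_dvd_three_mul_sub (e := 0) hnb hj hj' (by norm_num)
      (by simpa using Int.ModEq.dvd this)).1

lemma exists_avoidsDifferences_le_upperDensity {a b : ℤ} (ha : 0 < a) (hb : 0 < b)
    (hab : IsCoprime a b) : ∃ A, AvoidsDifferences a b A ∧
      (((a + 2 * b) / 3 : ℤ) : ℝ) / ((a + 2 * b : ℤ) : ℝ) ≤ upperDensity A := by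
  have hnb : IsCoprime (a + 2 * b) b := by simpa [mul_comm] using hab.add_mul_left_left 2
  exact ⟨_, avoidsDifferences_extremalSet hnb, le_upperDensity_of_forall_window (by omega)
    (by omega) (le_windowCard_extremalSet (by omega) hnb)⟩

lemma floor_one_div_three_mul (m : ℤ) : ⌊(1 : ℝ) / 3 * m⌋ = m / 3 := by
  have := Int.floor_div_natCast (m : ℝ) 3
  rw [Int.floor_intCast] at this
  rw [one_div_mul_eq_div]
  exact_mod_cast this

theorem stmt11 (l1 l2 : ℤ) (h1 : 0 < l1) (h2 : 0 < l2) (hco : Int.gcd l1 l2 = 1) :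
    dP ({0, l1, l1 + l2} : Set ℤ) =
      max ((⌊(1 : ℝ) / 3 * (l1 + 2 * l2)⌋ : ℝ) / (l1 + 2 * l2))
        ((⌊(1 : ℝ) / 3 * (2 * l1 + l2)⌋ : ℝ) / (2 * l1 + l2)) := by
  have hab : IsCoprime l1 l2 := Int.isCoprime_iff_gcd_eq_one.2 hco
  rw [show (l1 : ℝ) + 2 * l2 = ((l1 + 2 * l2 : ℤ) : ℝ) by push_cast; ring,
    show 2 * (l1 : ℝ) + l2 = ((2 * l1 + l2 : ℤ) : ℝ) by push_cast; ring,
    floor_one_div_three_mul, floor_one_div_three_mul]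
  have hupper : ∀ A, SPacking {0, l1, l1 + l2} A → upperDensity A ≤ _ := fun A hA =>
    upperDensity_le_of_avoidsDifferences h1 h2 ((sPacking_iff_avoidsDifferences h1 h2).1 hA)
  have hbdd : BddAbove (upperDensity '' {A | SPacking {0, l1, l1 + l2} A}) :=
    ⟨_, Set.forall_mem_image.2 hupper⟩
  refine le_antisymm (csSup_le ⟨_, ∅, fun _ h => h.elim, rfl⟩ (Set.forall_mem_image.2 hupper))
    (max_le ?_ ?_)
  · obtain ⟨A, hA, hle⟩ := exists_avoidsDifferences_le_upperDensity h1 h2 hab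
    exact hle.trans (le_csSup hbdd ⟨A, (sPacking_iff_avoidsDifferences h1 h2).2 hA, rfl⟩)
  · obtain ⟨A, hA, hle⟩ := exists_avoidsDifferences_le_upperDensity h2 h1 hab.symm
    rw [show l2 + 2 * l1 = 2 * l1 + l2 by ring] at hle
    exact hle.trans (le_csSup hbdd ⟨A, (sPacking_iff_avoidsDifferences h1 h2).2 hA.symm, rfl⟩)
end

section
/- Let λ₁, λ₂ be coprime positive integers with λ₁ ≡ λ₂ - 1 (mod 3), S = {0, λ₁, λ₁+λ₂}, and A ⊆ ℤ an S-packing set. For t ∈ ℤ let I₁(t) = {t+1, ..., t+2λ₁+λ₂} and I₂(t) = {t+λ₁+λ₂+1, ..., t+3λ₁+2λ₂}. Then 2|I₁(t) \ A| + |I₂(t) \ A| ≥ 4λ₁+2λ₂. -/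
open Filter Set

section AuxStmt14

open Finset in
private lemma stmt14_sum_shift (g : ℤ → ℤ) (a b c : ℤ) :
    ∑ n ∈ Finset.Icc a b, g (n + c) = ∑ n ∈ Finset.Icc (a + c) (b + c), g n := by
  rw [← Finset.map_add_right_Icc, Finset.sum_map]
  rfl

open Finset in
private lemma stmt14_sum_ind (g : ℤ → ℤ) (a b lo hi : ℤ) (h1 : lo ≤ a) (h2 : b ≤ hi) :
    ∑ n ∈ Finset.Icc a b, g n
      = ∑ n ∈ Finset.Icc lo hi, (if a ≤ n ∧ n ≤ b then g n else 0) := by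
  classical
  have hsub : Finset.Icc a b ⊆ Finset.Icc lo hi := by
    intro x hx
    simp only [Finset.mem_Icc] at hx ⊢
    omega
  rw [show (fun n => if a ≤ n ∧ n ≤ b then g n else 0)
      = fun n => if n ∈ Finset.Icc a b then g n else 0 by
    funext n; simp [Finset.mem_Icc]]
  rw [Finset.sum_ite_mem, Finset.inter_eq_right.mpr hsub]

set_option maxHeartbeats 3200000 in
private lemma stmt14_key (l1 l2 : ℤ) (h1 : 0 < l1) (h2 : 0 < l2) (g : ℤ → ℤ)
    (tri1 : ∀ n : ℤ, g n + g (n + l1) + g (n + (l1 + l2)) ≤ 1)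
    (tri2 : ∀ n : ℤ, g n + g (n + l2) + g (n + (l1 + l2)) ≤ 1)
    (t : ℤ) :
    2 * (∑ n ∈ Finset.Icc (t + 1) (t + 2 * l1 + l2), g n)
      + ∑ n ∈ Finset.Icc (t + l1 + l2 + 1) (t + 3 * l1 + 2 * l2), g n
      ≤ 2 * l1 + l2 := by
  classical
  set lo := t + 1 with hlo
  set hi := t + 3 * l1 + 2 * l2 with hhi
  have key : 2 * (∑ n ∈ Finset.Icc (t + 1) (t + 2 * l1 + l2), g n)
      + ∑ n ∈ Finset.Icc (t + l1 + l2 + 1) (t + 3 * l1 + 2 * l2), g n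
      = (∑ n ∈ Finset.Icc (t + 1) (t + l2), (g n + g (n + l1) + g (n + (l1 + l2))))
        + (∑ n ∈ Finset.Icc (t + 1) (t + l1), (g n + g (n + l2) + g (n + (l1 + l2))))
        + (∑ n ∈ Finset.Icc (t + l1 + l2 + 1) (t + l1 + l2 + l1),
            (g n + g (n + l2) + g (n + (l1 + l2)))) := by
    have expand : ∀ a b : ℤ, ∀ c : ℤ,
        ∑ n ∈ Finset.Icc a b, (g n + g (n + c) + g (n + (l1 + l2)))
          = (∑ n ∈ Finset.Icc a b, g n) + (∑ n ∈ Finset.Icc (a + c) (b + c), g n)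
            + (∑ n ∈ Finset.Icc (a + (l1 + l2)) (b + (l1 + l2)), g n) := by
      intro a b c
      rw [← stmt14_sum_shift g a b c, ← stmt14_sum_shift g a b (l1 + l2)]
      rw [Finset.sum_add_distrib, Finset.sum_add_distrib]
    rw [expand, expand, expand]
    rw [stmt14_sum_ind g (t + 1) (t + 2 * l1 + l2) lo hi (by omega) (by omega),
        stmt14_sum_ind g (t + l1 + l2 + 1) (t + 3 * l1 + 2 * l2) lo hi (by omega) (by omega),
        stmt14_sum_ind g (t + 1) (t + l2) lo hi (by omega) (by omega),
        stmt14_sum_ind g (t + 1 + l1) (t + l2 + l1) lo hi (by omega) (by omega),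
        stmt14_sum_ind g (t + 1 + (l1 + l2)) (t + l2 + (l1 + l2)) lo hi (by omega) (by omega),
        stmt14_sum_ind g (t + 1) (t + l1) lo hi (by omega) (by omega),
        stmt14_sum_ind g (t + 1 + l2) (t + l1 + l2) lo hi (by omega) (by omega),
        stmt14_sum_ind g (t + 1 + (l1 + l2)) (t + l1 + (l1 + l2)) lo hi (by omega) (by omega),
        stmt14_sum_ind g (t + l1 + l2 + 1) (t + l1 + l2 + l1) lo hi (by omega) (by omega),
        stmt14_sum_ind g (t + l1 + l2 + 1 + l2) (t + l1 + l2 + l1 + l2) lo hi (by omega) (by omega),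
        stmt14_sum_ind g (t + l1 + l2 + 1 + (l1 + l2)) (t + l1 + l2 + l1 + (l1 + l2)) lo hi
          (by omega) (by omega)]
    simp only [Finset.mul_sum, ← Finset.sum_add_distrib]
    apply Finset.sum_congr rfl
    intro n _
    split_ifs <;> omega
  rw [key]
  have b1 : ∑ n ∈ Finset.Icc (t + 1) (t + l2), (g n + g (n + l1) + g (n + (l1 + l2))) ≤ l2 := by
    calc ∑ n ∈ Finset.Icc (t + 1) (t + l2), (g n + g (n + l1) + g (n + (l1 + l2)))
        ≤ ∑ _n ∈ Finset.Icc (t + 1) (t + l2), (1 : ℤ) :=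
          Finset.sum_le_sum (fun n _ => tri1 n)
      _ = l2 := by
          rw [Finset.sum_const, Int.card_Icc]
          simp only [nsmul_eq_mul, mul_one]
          omega
  have b2 : ∑ n ∈ Finset.Icc (t + 1) (t + l1), (g n + g (n + l2) + g (n + (l1 + l2))) ≤ l1 := by
    calc ∑ n ∈ Finset.Icc (t + 1) (t + l1), (g n + g (n + l2) + g (n + (l1 + l2)))
        ≤ ∑ _n ∈ Finset.Icc (t + 1) (t + l1), (1 : ℤ) :=
          Finset.sum_le_sum (fun n _ => tri2 n)
      _ = l1 := by
          rw [Finset.sum_const, Int.card_Icc]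
          simp only [nsmul_eq_mul, mul_one]
          omega
  have b3 : ∑ n ∈ Finset.Icc (t + l1 + l2 + 1) (t + l1 + l2 + l1),
      (g n + g (n + l2) + g (n + (l1 + l2))) ≤ l1 := by
    calc ∑ n ∈ Finset.Icc (t + l1 + l2 + 1) (t + l1 + l2 + l1),
        (g n + g (n + l2) + g (n + (l1 + l2)))
        ≤ ∑ _n ∈ Finset.Icc (t + l1 + l2 + 1) (t + l1 + l2 + l1), (1 : ℤ) :=
          Finset.sum_le_sum (fun n _ => tri2 n)
      _ = l1 := by
          rw [Finset.sum_const, Int.card_Icc]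
          simp only [nsmul_eq_mul, mul_one]
          omega
  omega

private lemma stmt14_ncard (A : Set ℤ) (a b : ℤ) [DecidablePred (· ∈ A)] :
    ((Set.Icc a b \ A).ncard : ℤ) = ∑ n ∈ Finset.Icc a b, (if n ∈ A then (0 : ℤ) else 1) := by
  have hset : Set.Icc a b \ A = ↑((Finset.Icc a b).filter (fun n => ¬ n ∈ A)) := by
    ext n
    simp [Set.mem_diff, and_comm]
  rw [hset, Set.ncard_coe_finset, Finset.card_filter]
  push_cast
  apply Finset.sum_congr rfl
  intro n _
  split_ifs <;> simp

end AuxStmt14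

theorem stmt14 (l1 l2 : ℤ) (h1 : 0 < l1) (h2 : 0 < l2) (hco : Int.gcd l1 l2 = 1)
    (hmod : l1 % 3 = (l2 - 1) % 3) (A : Set ℤ)
    (hA : SPacking ({0, l1, l1 + l2} : Set ℤ) A) (t : ℤ) :
    2 * ((Set.Icc (t + 1) (t + 2 * l1 + l2) \ A).ncard : ℤ) +
      ((Set.Icc (t + l1 + l2 + 1) (t + 3 * l1 + 2 * l2) \ A).ncard : ℤ) ≥ 4 * l1 + 2 * l2 := by
  classical
  have nodiff : ∀ a b : ℤ, a ∈ A → b ∈ A →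
      (b - a = l1 ∨ b - a = l2 ∨ b - a = l1 + l2) → False := by
    intro a b ha hb hd
    have hne : a ≠ b := by omega
    have hdisj := hA a ha b hb hne
    rw [Set.disjoint_left] at hdisj
    rcases hd with hd | hd | hd
    · exact hdisj (a := l1 + a) ⟨l1, by simp, rfl⟩
        ⟨0, by simp, by show 0 + b = l1 + a; omega⟩
    · exact hdisj (a := l1 + l2 + a) ⟨l1 + l2, by simp, rfl⟩
        ⟨l1, by simp, by show l1 + b = l1 + l2 + a; omega⟩
    · exact hdisj (a := l1 + l2 + a) ⟨l1 + l2, by simp, rfl⟩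
        ⟨0, by simp, by show 0 + b = l1 + l2 + a; omega⟩
  set g : ℤ → ℤ := fun n => if n ∈ A then 1 else 0 with hg
  have hg01 : ∀ n, g n = 0 ∨ g n = 1 := by
    intro n; simp only [hg]; split_ifs <;> simp
  have hmem : ∀ n, g n = 1 → n ∈ A := by
    intro n; simp only [hg]; split_ifs <;> simp_all
  have tri1 : ∀ n : ℤ, g n + g (n + l1) + g (n + (l1 + l2)) ≤ 1 := by
    intro n
    rcases hg01 n with h | h <;> rcases hg01 (n + l1) with h' | h' <;>
      rcases hg01 (n + (l1 + l2)) with h'' | h'' <;>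
    first
      | omega
      | (exfalso; exact nodiff n (n + l1) (hmem _ h) (hmem _ h') (by omega))
      | (exfalso; exact nodiff n (n + (l1 + l2)) (hmem _ h) (hmem _ h'') (by omega))
      | (exfalso; exact nodiff (n + l1) (n + (l1 + l2)) (hmem _ h') (hmem _ h'') (by omega))
  have tri2 : ∀ n : ℤ, g n + g (n + l2) + g (n + (l1 + l2)) ≤ 1 := by
    intro n
    rcases hg01 n with h | h <;> rcases hg01 (n + l2) with h' | h' <;>
      rcases hg01 (n + (l1 + l2)) with h'' | h'' <;>
    first
      | omega
      | (exfalso; exact nodiff n (n + l2) (hmem _ h) (hmem _ h') (by omega))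
      | (exfalso; exact nodiff n (n + (l1 + l2)) (hmem _ h) (hmem _ h'') (by omega))
      | (exfalso; exact nodiff (n + l2) (n + (l1 + l2)) (hmem _ h') (hmem _ h'') (by omega))
  have hkey := stmt14_key l1 l2 h1 h2 g tri1 tri2 t
  have e1 : ((Set.Icc (t + 1) (t + 2 * l1 + l2) \ A).ncard : ℤ)
      = (2 * l1 + l2) - ∑ n ∈ Finset.Icc (t + 1) (t + 2 * l1 + l2), g n := by
    rw [stmt14_ncard A]
    have : ∀ n : ℤ, (if n ∈ A then (0 : ℤ) else 1) = 1 - g n := by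
      intro n; simp only [hg]; split_ifs <;> ring
    simp_rw [this]
    rw [Finset.sum_sub_distrib, Finset.sum_const, Int.card_Icc]
    simp only [nsmul_eq_mul, mul_one]
    omega
  have e2 : ((Set.Icc (t + l1 + l2 + 1) (t + 3 * l1 + 2 * l2) \ A).ncard : ℤ)
      = (2 * l1 + l2) - ∑ n ∈ Finset.Icc (t + l1 + l2 + 1) (t + 3 * l1 + 2 * l2), g n := by
    rw [stmt14_ncard A]
    have : ∀ n : ℤ, (if n ∈ A then (0 : ℤ) else 1) = 1 - g n := by
      intro n; simp only [hg]; split_ifs <;> ring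
    simp_rw [this]
    rw [Finset.sum_sub_distrib, Finset.sum_const, Int.card_Icc]
    simp only [nsmul_eq_mul, mul_one]
    omega
  rw [e1, e2]
  omega
end

section
/- Let λ₁, λ₂ be coprime positive integers with λ₁ ≡ λ₂ - 1 (mod 3), S = {0, λ₁, λ₁+λ₂}, and A ⊆ ℤ an S-packing set. For every t ∈ ℤ, with I₁(t) = {t+1, ..., t+2λ₁+λ₂} and I₂(t) = {t+λ₁+λ₂+1, ..., t+3λ₁+2λ₂}, at least one of the following holds: |A ∩ I₁(t)| ≤ ⌊(1/3)(2λ₁+λ₂)⌋, or |A ∩ I₁(t)| + |A ∩ I₂(t)| ≤ 2⌊(1/3)(2λ₁+λ₂)⌋. -/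
open Filter Set

/- ### Auxiliary machinery for the proof of `stmt15` -/

open scoped Classical in
/-- Indicator function of a set of integers, valued in `ℤ`. -/
noncomputable def chi (A : Set ℤ) (x : ℤ) : ℤ := if x ∈ A then 1 else 0

lemma chi_nonneg (A : Set ℤ) (x : ℤ) : 0 ≤ chi A x := by
  unfold chi; split_ifs <;> norm_num

lemma ncard_eq_sum_chi (A : Set ℤ) (a b : ℤ) :
    ((A ∩ Set.Icc (a + 1) b).ncard : ℤ) = ∑ x ∈ Finset.Ioc a b, chi A x := by
  classical
  have hset : A ∩ Set.Icc (a + 1) b = (↑((Finset.Ioc a b).filter (fun x => x ∈ A)) : Set ℤ) := by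
    ext x
    simp only [Set.mem_inter_iff, Set.mem_Icc, Finset.coe_filter, Finset.mem_Ioc,
      Set.mem_setOf_eq]
    constructor
    · rintro ⟨hxA, hx1, hx2⟩; exact ⟨⟨by omega, hx2⟩, hxA⟩
    · rintro ⟨⟨hx1, hx2⟩, hxA⟩; exact ⟨hxA, by omega, hx2⟩
  rw [hset, Set.ncard_coe_finset, Finset.card_filter, Nat.cast_sum]
  apply Finset.sum_congr rfl
  intro x _
  unfold chi
  split_ifs <;> norm_num

lemma sum_Ioc_split (A : Set ℤ) (t a b : ℤ) (h0 : 0 ≤ a) (hab : a ≤ b) :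
    ∑ x ∈ Finset.Ioc (t + a) (t + b), chi A x
      = (∑ x ∈ Finset.Ioc t (t + b), chi A x) - ∑ x ∈ Finset.Ioc t (t + a), chi A x := by
  classical
  have hu : Finset.Ioc t (t + a) ∪ Finset.Ioc (t + a) (t + b) = Finset.Ioc t (t + b) :=
    Finset.Ioc_union_Ioc_eq_Ioc (by omega) (by omega)
  have hd : Disjoint (Finset.Ioc t (t + a)) (Finset.Ioc (t + a) (t + b)) := by
    rw [Finset.disjoint_left]
    intro x hx hx'
    simp only [Finset.mem_Ioc] at hx hx'
    omega
  rw [← hu, Finset.sum_union hd]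
  ring

lemma piece (A : Set ℤ) (t l1 l2 a b s a' b' : ℤ) (h0 : 0 ≤ a) (hab : a ≤ b)
    (hbn : b ≤ 2 * l1 + l2) (hs : 0 ≤ s) (ha' : a' = a + s) (hb' : b' = b + s) :
    (∑ j ∈ Finset.Ioc t (t + (2 * l1 + l2)),
        (if j ∈ Finset.Ioc (t + a) (t + b) then (1 : ℤ) else 0) * chi A (j + s))
      = (∑ x ∈ Finset.Ioc t (t + b'), chi A x) - ∑ x ∈ Finset.Ioc t (t + a'), chi A x := by
  classical
  subst ha'; subst hb'
  have hsub : Finset.Ioc (t + a) (t + b) ⊆ Finset.Ioc t (t + (2 * l1 + l2)) :=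
    Finset.Ioc_subset_Ioc (by omega) (by omega)
  have step1 : (∑ j ∈ Finset.Ioc t (t + (2 * l1 + l2)),
      (if j ∈ Finset.Ioc (t + a) (t + b) then (1 : ℤ) else 0) * chi A (j + s))
      = ∑ j ∈ Finset.Ioc (t + a) (t + b), chi A (j + s) := by
    calc (∑ j ∈ Finset.Ioc t (t + (2 * l1 + l2)),
        (if j ∈ Finset.Ioc (t + a) (t + b) then (1 : ℤ) else 0) * chi A (j + s))
        = ∑ j ∈ Finset.Ioc t (t + (2 * l1 + l2)),
            (if j ∈ Finset.Ioc (t + a) (t + b) then chi A (j + s) else 0) :=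
          Finset.sum_congr rfl (fun j _ => by split_ifs <;> ring)
      _ = ∑ j ∈ Finset.Ioc t (t + (2 * l1 + l2)) ∩ Finset.Ioc (t + a) (t + b), chi A (j + s) :=
          Finset.sum_ite_mem _ _ _
      _ = ∑ j ∈ Finset.Ioc (t + a) (t + b), chi A (j + s) := by
          rw [Finset.inter_eq_right.mpr hsub]
  rw [step1]
  have step2 : (∑ j ∈ Finset.Ioc (t + a) (t + b), chi A (j + s))
      = ∑ x ∈ Finset.Ioc (t + (a + s)) (t + (b + s)), chi A x := by
    rw [show t + (a + s) = (t + a) + s by ring, show t + (b + s) = (t + b) + s by ring,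
      ← Finset.map_add_right_Ioc, Finset.sum_map]
    apply Finset.sum_congr rfl
    intro j _
    rfl
  rw [step2]
  exact sum_Ioc_split A t (a + s) (b + s) (by omega) (by omega)

lemma sum_ind (t a b n' : ℤ) (h0 : 0 ≤ a) (hab : a ≤ b) (hbn : b ≤ n') :
    (∑ j ∈ Finset.Ioc t (t + n'), (if j ∈ Finset.Ioc (t + a) (t + b) then (1 : ℤ) else 0))
      = b - a := by
  classical
  rw [Finset.sum_ite_mem,
    Finset.inter_eq_right.mpr (Finset.Ioc_subset_Ioc (by omega) (by omega)),
    Finset.sum_const, nsmul_eq_mul, mul_one, Int.card_Ioc]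
  omega

lemma sum_mul_expand3 (E : Finset ℤ) (p q r c0 c1 c2 : ℤ → ℤ) :
    (∑ j ∈ E, (p j + q j - r j) * (c0 j + c1 j + c2 j))
      = (((∑ j ∈ E, p j * c0 j) + (∑ j ∈ E, p j * c1 j)) + (∑ j ∈ E, p j * c2 j))
      + (((∑ j ∈ E, q j * c0 j) + (∑ j ∈ E, q j * c1 j)) + (∑ j ∈ E, q j * c2 j))
      - (((∑ j ∈ E, r j * c0 j) + (∑ j ∈ E, r j * c1 j)) + (∑ j ∈ E, r j * c2 j)) := by
  simp only [← Finset.sum_add_distrib, ← Finset.sum_sub_distrib]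
  exact Finset.sum_congr rfl fun j _ => by ring

lemma sum_addsub_expand (E : Finset ℤ) (p q r : ℤ → ℤ) :
    (∑ j ∈ E, (p j + q j - r j)) = (∑ j ∈ E, p j) + (∑ j ∈ E, q j) - (∑ j ∈ E, r j) := by
  simp only [← Finset.sum_add_distrib, ← Finset.sum_sub_distrib]

theorem stmt15 (l1 l2 : ℤ) (h1 : 0 < l1) (h2 : 0 < l2) (hco : Int.gcd l1 l2 = 1)
    (hmod : l1 % 3 = (l2 - 1) % 3) (A : Set ℤ)
    (hA : SPacking ({0, l1, l1 + l2} : Set ℤ) A) (t : ℤ) :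
    ((A ∩ Set.Icc (t + 1) (t + 2 * l1 + l2)).ncard : ℤ) ≤ ⌊(1 : ℝ) / 3 * (2 * l1 + l2)⌋ ∨
    ((A ∩ Set.Icc (t + 1) (t + 2 * l1 + l2)).ncard : ℤ) +
      ((A ∩ Set.Icc (t + l1 + l2 + 1) (t + 3 * l1 + 2 * l2)).ncard : ℤ) ≤
        2 * ⌊(1 : ℝ) / 3 * (2 * l1 + l2)⌋ := by
  classical
  right
  -- The packing hypothesis forbids differences `l1`, `l2`, `l1 + l2` within `A`.
  have hpack : ∀ x d : ℤ, (d = l1 ∨ d = l2 ∨ d = l1 + l2) → x ∈ A → x + d ∈ A → False := by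
    intro x d hd hx hxd
    have hne : x ≠ x + d := by rcases hd with h | h | h <;> omega
    have hdisj := hA x hx (x + d) hxd hne
    rw [Set.disjoint_left] at hdisj
    have hmem : ∀ s a : ℤ, s ∈ ({0, l1, l1 + l2} : Set ℤ) →
        s + a ∈ translateSet ({0, l1, l1 + l2} : Set ℤ) a := fun s a hs => ⟨s, hs, rfl⟩
    rcases hd with h | h | h
    · refine hdisj (hmem l1 x (by simp)) ?_
      have := hmem 0 (x + d) (by simp)
      rwa [show (0 : ℤ) + (x + d) = l1 + x by rw [h]; ring] at this
    · refine hdisj (hmem (l1 + l2) x (by simp)) ?_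
      have := hmem l1 (x + d) (by simp)
      rwa [show l1 + (x + d) = (l1 + l2) + x by rw [h]; ring] at this
    · refine hdisj (hmem (l1 + l2) x (by simp)) ?_
      have := hmem 0 (x + d) (by simp)
      rwa [show (0 : ℤ) + (x + d) = (l1 + l2) + x by rw [h]; ring] at this
  -- triangle bounds
  have htri1 : ∀ j : ℤ, chi A (j + 0) + chi A (j + l1) + chi A (j + (l1 + l2)) ≤ 1 := by
    intro j
    have hab : ¬(j ∈ A ∧ j + l1 ∈ A) := fun h => hpack j l1 (Or.inl rfl) h.1 h.2
    have hac : ¬(j ∈ A ∧ j + (l1 + l2) ∈ A) := fun h =>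
      hpack j (l1 + l2) (Or.inr (Or.inr rfl)) h.1 h.2
    have hbc : ¬(j + l1 ∈ A ∧ j + (l1 + l2) ∈ A) := fun h =>
      hpack (j + l1) l2 (Or.inr (Or.inl rfl)) h.1
        (by rw [show j + l1 + l2 = j + (l1 + l2) by ring]; exact h.2)
    rw [add_zero]
    by_cases ha : j ∈ A <;> by_cases hb : j + l1 ∈ A <;> by_cases hc : j + (l1 + l2) ∈ A
    · exact (hab ⟨ha, hb⟩).elim
    · exact (hab ⟨ha, hb⟩).elim
    · exact (hac ⟨ha, hc⟩).elim
    · norm_num [chi, ha, hb, hc]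
    · exact (hbc ⟨hb, hc⟩).elim
    · norm_num [chi, ha, hb, hc]
    · norm_num [chi, ha, hb, hc]
    · norm_num [chi, ha, hb, hc]
  have htri2 : ∀ j : ℤ, chi A (j + 0) + chi A (j + l2) + chi A (j + (l1 + l2)) ≤ 1 := by
    intro j
    have hab : ¬(j ∈ A ∧ j + l2 ∈ A) := fun h => hpack j l2 (Or.inr (Or.inl rfl)) h.1 h.2
    have hac : ¬(j ∈ A ∧ j + (l1 + l2) ∈ A) := fun h =>
      hpack j (l1 + l2) (Or.inr (Or.inr rfl)) h.1 h.2
    have hbc : ¬(j + l2 ∈ A ∧ j + (l1 + l2) ∈ A) := fun h =>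
      hpack (j + l2) l1 (Or.inl rfl) h.1
        (by rw [show j + l2 + l1 = j + (l1 + l2) by ring]; exact h.2)
    rw [add_zero]
    by_cases ha : j ∈ A <;> by_cases hb : j + l2 ∈ A <;> by_cases hc : j + (l1 + l2) ∈ A
    · exact (hab ⟨ha, hb⟩).elim
    · exact (hab ⟨ha, hb⟩).elim
    · exact (hac ⟨ha, hc⟩).elim
    · norm_num [chi, ha, hb, hc]
    · exact (hbc ⟨hb, hc⟩).elim
    · norm_num [chi, ha, hb, hc]
    · norm_num [chi, ha, hb, hc]
    · norm_num [chi, ha, hb, hc]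
  -- notation
  set Φ : ℤ → ℤ := fun c => ∑ x ∈ Finset.Ioc t (t + c), chi A x with hPhi
  have hPhiApp : ∀ c : ℤ, (∑ x ∈ Finset.Ioc t (t + c), chi A x) = Φ c := fun c => rfl
  have hPhi0 : Φ 0 = 0 := by simp [hPhi]
  -- the two interval counts
  have e1 : ((A ∩ Set.Icc (t + 1) (t + 2 * l1 + l2)).ncard : ℤ) = Φ (2 * l1 + l2) := by
    rw [show t + 2 * l1 + l2 = t + (2 * l1 + l2) by ring] 
    rw [ncard_eq_sum_chi A t (t + (2 * l1 + l2)), hPhiApp]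
  have e2 : ((A ∩ Set.Icc (t + l1 + l2 + 1) (t + 3 * l1 + 2 * l2)).ncard : ℤ)
      = Φ (3 * l1 + 2 * l2) - Φ (l1 + l2) := by
    rw [show t + l1 + l2 + 1 = (t + (l1 + l2)) + 1 by ring,
      show t + 3 * l1 + 2 * l2 = t + (3 * l1 + 2 * l2) by ring,
      ncard_eq_sum_chi A (t + (l1 + l2)) (t + (3 * l1 + 2 * l2)),
      show t + (3 * l1 + 2 * l2) = (t + (l1 + l2)) + (2 * l1 + l2) by ring]
    rw [show ((t + (l1 + l2)) + (2 * l1 + l2)) = t + ((l1 + l2) + (2 * l1 + l2)) by ring]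
    rw [sum_Ioc_split A t (l1 + l2) ((l1 + l2) + (2 * l1 + l2)) (by omega) (by omega)]
    rw [show (l1 + l2) + (2 * l1 + l2) = 3 * l1 + 2 * l2 by ring, hPhiApp, hPhiApp]
  -- the two weighted triangle sums
  have hT1 : (∑ j ∈ Finset.Ioc t (t + (2 * l1 + l2)),
      ((if j ∈ Finset.Ioc (t + 0) (t + (2 * l1 + l2)) then (1 : ℤ) else 0)
        + (if j ∈ Finset.Ioc (t + 0) (t + l1) then (1 : ℤ) else 0)
        - (if j ∈ Finset.Ioc (t + l2) (t + (l1 + l2)) then (1 : ℤ) else 0))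
      * (chi A (j + 0) + chi A (j + l1) + chi A (j + (l1 + l2))))
      = ((Φ (2 * l1 + l2) - Φ 0) + (Φ (3 * l1 + l2) - Φ l1)
          + (Φ (3 * l1 + 2 * l2) - Φ (l1 + l2)))
        + ((Φ l1 - Φ 0) + (Φ (2 * l1) - Φ l1) + (Φ (2 * l1 + l2) - Φ (l1 + l2)))
        - ((Φ (l1 + l2) - Φ l2) + (Φ (2 * l1 + l2) - Φ (l1 + l2))
          + (Φ (2 * l1 + 2 * l2) - Φ (l1 + 2 * l2))) := by
    rw [sum_mul_expand3]
    rw [piece A t l1 l2 0 (2 * l1 + l2) 0 0 (2 * l1 + l2) (by omega) (by omega) (by omega)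
        (by omega) (by ring) (by ring),
      piece A t l1 l2 0 (2 * l1 + l2) l1 l1 (3 * l1 + l2) (by omega) (by omega) (by omega)
        (by omega) (by ring) (by ring),
      piece A t l1 l2 0 (2 * l1 + l2) (l1 + l2) (l1 + l2) (3 * l1 + 2 * l2) (by omega) (by omega)
        (by omega) (by omega) (by ring) (by ring),
      piece A t l1 l2 0 l1 0 0 l1 (by omega) (by omega) (by omega) (by omega) (by ring) (by ring),
      piece A t l1 l2 0 l1 l1 l1 (2 * l1) (by omega) (by omega) (by omega) (by omega) (by ring)
        (by ring),
      piece A t l1 l2 0 l1 (l1 + l2) (l1 + l2) (2 * l1 + l2) (by omega) (by omega) (by omega)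
        (by omega) (by ring) (by ring),
      piece A t l1 l2 l2 (l1 + l2) 0 l2 (l1 + l2) (by omega) (by omega) (by omega) (by omega)
        (by ring) (by ring),
      piece A t l1 l2 l2 (l1 + l2) l1 (l1 + l2) (2 * l1 + l2) (by omega) (by omega) (by omega)
        (by omega) (by ring) (by ring),
      piece A t l1 l2 l2 (l1 + l2) (l1 + l2) (l1 + 2 * l2) (2 * l1 + 2 * l2) (by omega) (by omega)
        (by omega) (by omega) (by ring) (by ring)]
  have hT2 : (∑ j ∈ Finset.Ioc t (t + (2 * l1 + l2)),
      ((if j ∈ Finset.Ioc (t + 0) (t + (2 * l1 + l2)) then (1 : ℤ) else 0)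
        + (if j ∈ Finset.Ioc (t + (l1 + l2)) (t + (2 * l1 + l2)) then (1 : ℤ) else 0)
        - (if j ∈ Finset.Ioc (t + l1) (t + (2 * l1)) then (1 : ℤ) else 0))
      * (chi A (j + 0) + chi A (j + l2) + chi A (j + (l1 + l2))))
      = ((Φ (2 * l1 + l2) - Φ 0) + (Φ (2 * l1 + 2 * l2) - Φ l2)
          + (Φ (3 * l1 + 2 * l2) - Φ (l1 + l2)))
        + ((Φ (2 * l1 + l2) - Φ (l1 + l2)) + (Φ (2 * l1 + 2 * l2) - Φ (l1 + 2 * l2))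
          + (Φ (3 * l1 + 2 * l2) - Φ (2 * l1 + 2 * l2)))
        - ((Φ (2 * l1) - Φ l1) + (Φ (2 * l1 + l2) - Φ (l1 + l2))
          + (Φ (3 * l1 + l2) - Φ (2 * l1 + l2))) := by
    rw [sum_mul_expand3]
    rw [piece A t l1 l2 0 (2 * l1 + l2) 0 0 (2 * l1 + l2) (by omega) (by omega) (by omega)
        (by omega) (by ring) (by ring),
      piece A t l1 l2 0 (2 * l1 + l2) l2 l2 (2 * l1 + 2 * l2) (by omega) (by omega) (by omega)
        (by omega) (by ring) (by ring),
      piece A t l1 l2 0 (2 * l1 + l2) (l1 + l2) (l1 + l2) (3 * l1 + 2 * l2) (by omega) (by omega)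
        (by omega) (by omega) (by ring) (by ring),
      piece A t l1 l2 (l1 + l2) (2 * l1 + l2) 0 (l1 + l2) (2 * l1 + l2) (by omega) (by omega)
        (by omega) (by omega) (by ring) (by ring),
      piece A t l1 l2 (l1 + l2) (2 * l1 + l2) l2 (l1 + 2 * l2) (2 * l1 + 2 * l2) (by omega)
        (by omega) (by omega) (by omega) (by ring) (by ring),
      piece A t l1 l2 (l1 + l2) (2 * l1 + l2) (l1 + l2) (2 * l1 + 2 * l2) (3 * l1 + 2 * l2)
        (by omega) (by omega) (by omega) (by omega) (by ring) (by ring),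
      piece A t l1 l2 l1 (2 * l1) 0 l1 (2 * l1) (by omega) (by omega) (by omega) (by omega)
        (by ring) (by ring),
      piece A t l1 l2 l1 (2 * l1) l2 (l1 + l2) (2 * l1 + l2) (by omega) (by omega) (by omega)
        (by omega) (by ring) (by ring),
      piece A t l1 l2 l1 (2 * l1) (l1 + l2) (2 * l1 + l2) (3 * l1 + l2) (by omega) (by omega)
        (by omega) (by omega) (by ring) (by ring)]
  -- nonnegativity of the weights
  have hQ1 : ∀ j : ℤ, (0 : ℤ) ≤
      (if j ∈ Finset.Ioc (t + 0) (t + (2 * l1 + l2)) then (1 : ℤ) else 0)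
        + (if j ∈ Finset.Ioc (t + 0) (t + l1) then (1 : ℤ) else 0)
        - (if j ∈ Finset.Ioc (t + l2) (t + (l1 + l2)) then (1 : ℤ) else 0) := by
    intro j
    simp only [Finset.mem_Ioc]
    split_ifs <;> omega
  have hQ2 : ∀ j : ℤ, (0 : ℤ) ≤
      (if j ∈ Finset.Ioc (t + 0) (t + (2 * l1 + l2)) then (1 : ℤ) else 0)
        + (if j ∈ Finset.Ioc (t + (l1 + l2)) (t + (2 * l1 + l2)) then (1 : ℤ) else 0)
        - (if j ∈ Finset.Ioc (t + l1) (t + (2 * l1)) then (1 : ℤ) else 0) := by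
    intro j
    simp only [Finset.mem_Ioc]
    split_ifs <;> omega
  -- total weights
  have hW1 : (∑ j ∈ Finset.Ioc t (t + (2 * l1 + l2)),
      ((if j ∈ Finset.Ioc (t + 0) (t + (2 * l1 + l2)) then (1 : ℤ) else 0)
        + (if j ∈ Finset.Ioc (t + 0) (t + l1) then (1 : ℤ) else 0)
        - (if j ∈ Finset.Ioc (t + l2) (t + (l1 + l2)) then (1 : ℤ) else 0)))
      = 2 * l1 + l2 := by
    rw [sum_addsub_expand]
    rw [sum_ind t 0 (2 * l1 + l2) (2 * l1 + l2) (by omega) (by omega) (by omega),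
      sum_ind t 0 l1 (2 * l1 + l2) (by omega) (by omega) (by omega),
      sum_ind t l2 (l1 + l2) (2 * l1 + l2) (by omega) (by omega) (by omega)]
    ring
  have hW2 : (∑ j ∈ Finset.Ioc t (t + (2 * l1 + l2)),
      ((if j ∈ Finset.Ioc (t + 0) (t + (2 * l1 + l2)) then (1 : ℤ) else 0)
        + (if j ∈ Finset.Ioc (t + (l1 + l2)) (t + (2 * l1 + l2)) then (1 : ℤ) else 0)
        - (if j ∈ Finset.Ioc (t + l1) (t + (2 * l1)) then (1 : ℤ) else 0)))
      = 2 * l1 + l2 := by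
    rw [sum_addsub_expand]
    rw [sum_ind t 0 (2 * l1 + l2) (2 * l1 + l2) (by omega) (by omega) (by omega),
      sum_ind t (l1 + l2) (2 * l1 + l2) (2 * l1 + l2) (by omega) (by omega) (by omega),
      sum_ind t l1 (2 * l1) (2 * l1 + l2) (by omega) (by omega) (by omega)]
    ring
  -- the two weighted sums are bounded by the total weights
  have hB1 : (∑ j ∈ Finset.Ioc t (t + (2 * l1 + l2)),
      ((if j ∈ Finset.Ioc (t + 0) (t + (2 * l1 + l2)) then (1 : ℤ) else 0)
        + (if j ∈ Finset.Ioc (t + 0) (t + l1) then (1 : ℤ) else 0)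
        - (if j ∈ Finset.Ioc (t + l2) (t + (l1 + l2)) then (1 : ℤ) else 0))
      * (chi A (j + 0) + chi A (j + l1) + chi A (j + (l1 + l2))))
      ≤ ∑ j ∈ Finset.Ioc t (t + (2 * l1 + l2)),
        ((if j ∈ Finset.Ioc (t + 0) (t + (2 * l1 + l2)) then (1 : ℤ) else 0)
          + (if j ∈ Finset.Ioc (t + 0) (t + l1) then (1 : ℤ) else 0)
          - (if j ∈ Finset.Ioc (t + l2) (t + (l1 + l2)) then (1 : ℤ) else 0)) := by
    apply Finset.sum_le_sum
    intro j _
    calc ((if j ∈ Finset.Ioc (t + 0) (t + (2 * l1 + l2)) then (1 : ℤ) else 0)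
        + (if j ∈ Finset.Ioc (t + 0) (t + l1) then (1 : ℤ) else 0)
        - (if j ∈ Finset.Ioc (t + l2) (t + (l1 + l2)) then (1 : ℤ) else 0))
        * (chi A (j + 0) + chi A (j + l1) + chi A (j + (l1 + l2)))
        ≤ ((if j ∈ Finset.Ioc (t + 0) (t + (2 * l1 + l2)) then (1 : ℤ) else 0)
        + (if j ∈ Finset.Ioc (t + 0) (t + l1) then (1 : ℤ) else 0)
        - (if j ∈ Finset.Ioc (t + l2) (t + (l1 + l2)) then (1 : ℤ) else 0)) * 1 :=
          mul_le_mul_of_nonneg_left (htri1 j) (hQ1 j)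
      _ = _ := mul_one _
  have hB2 : (∑ j ∈ Finset.Ioc t (t + (2 * l1 + l2)),
      ((if j ∈ Finset.Ioc (t + 0) (t + (2 * l1 + l2)) then (1 : ℤ) else 0)
        + (if j ∈ Finset.Ioc (t + (l1 + l2)) (t + (2 * l1 + l2)) then (1 : ℤ) else 0)
        - (if j ∈ Finset.Ioc (t + l1) (t + (2 * l1)) then (1 : ℤ) else 0))
      * (chi A (j + 0) + chi A (j + l2) + chi A (j + (l1 + l2))))
      ≤ ∑ j ∈ Finset.Ioc t (t + (2 * l1 + l2)),
        ((if j ∈ Finset.Ioc (t + 0) (t + (2 * l1 + l2)) then (1 : ℤ) else 0)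
          + (if j ∈ Finset.Ioc (t + (l1 + l2)) (t + (2 * l1 + l2)) then (1 : ℤ) else 0)
          - (if j ∈ Finset.Ioc (t + l1) (t + (2 * l1)) then (1 : ℤ) else 0)) := by
    apply Finset.sum_le_sum
    intro j _
    calc ((if j ∈ Finset.Ioc (t + 0) (t + (2 * l1 + l2)) then (1 : ℤ) else 0)
        + (if j ∈ Finset.Ioc (t + (l1 + l2)) (t + (2 * l1 + l2)) then (1 : ℤ) else 0)
        - (if j ∈ Finset.Ioc (t + l1) (t + (2 * l1)) then (1 : ℤ) else 0))
        * (chi A (j + 0) + chi A (j + l2) + chi A (j + (l1 + l2)))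
        ≤ ((if j ∈ Finset.Ioc (t + 0) (t + (2 * l1 + l2)) then (1 : ℤ) else 0)
        + (if j ∈ Finset.Ioc (t + (l1 + l2)) (t + (2 * l1 + l2)) then (1 : ℤ) else 0)
        - (if j ∈ Finset.Ioc (t + l1) (t + (2 * l1)) then (1 : ℤ) else 0)) * 1 :=
          mul_le_mul_of_nonneg_left (htri2 j) (hQ2 j)
      _ = _ := mul_one _
  -- the master inequality
  have hmaster : 3 * (Φ (2 * l1 + l2) + (Φ (3 * l1 + 2 * l2) - Φ (l1 + l2)))
      ≤ 2 * (2 * l1 + l2) := by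
    linarith [hT1, hT2, hB1, hB2, hW1, hW2]
  -- arithmetic conclusion
  obtain ⟨k, hk⟩ : ∃ k : ℤ, 2 * l1 + l2 = 3 * k + 1 := ⟨(2 * l1 + l2 - 1) / 3, by omega⟩
  have hfloor : ⌊(1 : ℝ) / 3 * (2 * (l1 : ℝ) + (l2 : ℝ))⌋ = k := by
    have hcast : (1 : ℝ) / 3 * (2 * (l1 : ℝ) + (l2 : ℝ)) = (k : ℝ) + 1 / 3 := by
      have h' : ((2 * l1 + l2 : ℤ) : ℝ) = ((3 * k + 1 : ℤ) : ℝ) := by rw [hk]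
      push_cast at h'
      linarith
    rw [hcast, Int.floor_intCast_add]
    have h13 : ⌊(1 : ℝ) / 3⌋ = 0 := by
      rw [Int.floor_eq_zero_iff]
      constructor <;> norm_num
    rw [h13, add_zero]
  rw [e1, e2, hfloor]
  set X := Φ (2 * l1 + l2)
  set Y := Φ (3 * l1 + 2 * l2)
  set Z := Φ (l1 + l2)
  omega
end

section
/- Let λ₁, λ₂ be coprime positive integers with λ₁ ≡ λ₂ + 1 (mod 3) and set m = 2λ₁ + λ₂. In ℤ/mℤ, the subgroup generated by the residue of λ₁ is all of ℤ/mℤ, and λ₂ ≡ -2λ₁ (mod m); consequently there exists a subset X ⊆ ℤ/mℤ with |X| = ⌊2m/3⌋ such that no x ∈ ℤ/mℤ satisfies {x, x+λ₁, x+λ₁+λ₂} ⊆ X and no x satisfies {x, x-λ₁, x-λ₁-λ₂} ⊆ X (all arithmetic mod m). -/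
open Filter Set

theorem stmt18 (l1 l2 : ℤ) (h1 : 0 < l1) (h2 : 0 < l2) (hco : Int.gcd l1 l2 = 1)
    (hmod : l1 % 3 = (l2 + 1) % 3) :
    AddSubgroup.zmultiples ((l1 : ZMod (2 * l1 + l2).toNat)) = ⊤ ∧
    ((l2 : ZMod (2 * l1 + l2).toNat) = -2 * (l1 : ZMod (2 * l1 + l2).toNat)) ∧
    ∃ X : Finset (ZMod (2 * l1 + l2).toNat),
      X.card = 2 * (2 * l1 + l2).toNat / 3 ∧
      (∀ x : ZMod (2 * l1 + l2).toNat,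
        ¬({x, x + (l1 : ZMod (2 * l1 + l2).toNat),
            x + (l1 : ZMod (2 * l1 + l2).toNat) + (l2 : ZMod (2 * l1 + l2).toNat)} ⊆ X)) ∧
      (∀ x : ZMod (2 * l1 + l2).toNat,
        ¬({x, x - (l1 : ZMod (2 * l1 + l2).toNat),
            x - (l1 : ZMod (2 * l1 + l2).toNat) - (l2 : ZMod (2 * l1 + l2).toNat)} ⊆ X)) := by
  classical
  set N := (2 * l1 + l2).toNat with hNdef
  have hNm : (N : ℤ) = 2 * l1 + l2 := by omega
  have hN3 : N % 3 = 2 := by omega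
  have hNge : 3 ≤ N := by omega
  haveI : NeZero N := ⟨by omega⟩
  haveI : Fact (1 < N) := ⟨by omega⟩
  -- coprimality
  have hgnat : Nat.gcd l1.toNat l2.toNat = 1 := by
    have h' : l1.natAbs.gcd l2.natAbs = 1 := hco
    rwa [show l1.natAbs = l1.toNat by omega, show l2.natAbs = l2.toNat by omega] at h'
  have hcop : Nat.Coprime l1.toNat N := by
    unfold Nat.Coprime
    rw [show N = l2.toNat + 2 * l1.toNat by omega, Nat.gcd_add_mul_right_right, hgnat]
  have hl1cast : ((l1.toNat : ℕ) : ZMod N) = (l1 : ZMod N) := by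
    have h' : ((l1.toNat : ℤ) : ZMod N) = (l1 : ZMod N) := by
      rw [Int.toNat_of_nonneg h1.le]
    rwa [Int.cast_natCast] at h'
  have hu : IsUnit (l1 : ZMod N) := by
    rw [← hl1cast]; exact (ZMod.isUnit_iff_coprime l1.toNat N).mpr hcop
  obtain ⟨b, hb⟩ : ∃ b : ZMod N, b * (l1 : ZMod N) = 1 := by
    obtain ⟨u, hu'⟩ := hu
    exact ⟨(↑u⁻¹ : ZMod N), by rw [← hu', Units.inv_mul]⟩
  have hl2 : (l2 : ZMod N) = -2 * (l1 : ZMod N) := by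
    have h0 : ((2 * l1 + l2 : ℤ) : ZMod N) = 0 := by
      rw [ZMod.intCast_zmod_eq_zero_iff_dvd]
      exact ⟨1, by omega⟩
    push_cast at h0
    linear_combination h0
  refine ⟨?_, hl2, ?_⟩
  · rw [AddSubgroup.eq_top_iff']
    intro x
    rw [AddSubgroup.mem_zmultiples_iff]
    refine ⟨((x * b).val : ℤ), ?_⟩
    rw [zsmul_eq_mul]
    push_cast
    rw [ZMod.natCast_val, ZMod.cast_id, mul_assoc, hb, mul_one]
  · have hneg : (l1 : ZMod N) + l2 = -(l1 : ZMod N) := by rw [hl2]; ring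
    set F : Finset ℕ := (Finset.range N).filter (fun r => r % 3 ≠ 2 ∧ r ≠ N - 1) with hF
    set X' : Finset (ZMod N) := F.image (fun r : ℕ => (r : ZMod N)) with hX'
    have hmemX' : ∀ z : ZMod N, z ∈ X' ↔ (z.val % 3 ≠ 2 ∧ z.val ≠ N - 1) := by
      intro z
      simp only [hX', hF, Finset.mem_image, Finset.mem_filter, Finset.mem_range]
      constructor
      · rintro ⟨r, ⟨hr, h⟩, rfl⟩
        rwa [ZMod.val_cast_of_lt hr]
      · intro h
        exact ⟨z.val, ⟨z.val_lt, h⟩, (ZMod.natCast_val z).trans (ZMod.cast_id N z)⟩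
    have hcardF : F.card = 2 * N / 3 := by
      rw [← Finset.card_range (2 * N / 3)]
      apply Finset.card_bij' (fun r _ => 2 * (r / 3) + r % 3) (fun s _ => 3 * (s / 2) + s % 2)
      all_goals intro a ha
      all_goals simp only [hF, Finset.mem_filter, Finset.mem_range] at ha ⊢
      all_goals omega
    have hcardX' : X'.card = F.card := by
      apply Finset.card_image_of_injOn
      intro r hr s hs h
      simp only [hF, Finset.coe_filter, Finset.mem_range, Set.mem_setOf_eq] at hr hs
      have h' : ((r : ZMod N)) = ((s : ZMod N)) := h
      rw [← ZMod.val_cast_of_lt hr.1, ← ZMod.val_cast_of_lt hs.1, h']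
    have hinj : Function.Injective (fun z : ZMod N => (l1 : ZMod N) * z) := by
      intro z1 z2 h
      have h' := congrArg (fun w => b * w) h
      simpa [← mul_assoc, hb] using h'
    set X : Finset (ZMod N) := X'.image (fun z => (l1 : ZMod N) * z) with hXdef
    have hmemX : ∀ z : ZMod N, z ∈ X ↔ b * z ∈ X' := by
      intro z
      simp only [hXdef, Finset.mem_image]
      constructor
      · rintro ⟨w, hw, rfl⟩
        rwa [← mul_assoc, hb, one_mul]
      · intro h
        exact ⟨b * z, h, by rw [← mul_assoc, mul_comm (l1 : ZMod N) b, hb, one_mul]⟩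
    have key : ∀ y : ZMod N, ¬(y - 1 ∈ X' ∧ y ∈ X' ∧ y + 1 ∈ X') := by
      intro y hy
      rw [hmemX' (y - 1), hmemX' y, hmemX' (y + 1)] at hy
      obtain ⟨hA, hB, hC⟩ := hy
      have hv := ZMod.val_lt y
      have e1 : (y + 1).val = (y.val + 1) % N := by rw [ZMod.val_add, ZMod.val_one]
      have em1 : ((N - 1 : ℕ) : ZMod N) = -1 := by
        have h0 : ((N : ℕ) : ZMod N) = 0 := ZMod.natCast_self N
        rw [Nat.cast_sub (by omega : 1 ≤ N), h0, Nat.cast_one, zero_sub]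
      have e2 : (y - 1).val = (y.val + (N - 1)) % N := by
        rw [show y - 1 = y + ((N - 1 : ℕ) : ZMod N) by rw [em1]; ring,
          ZMod.val_add, ZMod.val_cast_of_lt (by omega : N - 1 < N)]
      rcases Nat.lt_or_ge (y.val + 1) N with h | h
      · rw [Nat.mod_eq_of_lt h] at e1
        rcases Nat.eq_zero_or_pos y.val with h0 | h0
        · rw [h0, zero_add, Nat.mod_eq_of_lt (by omega : N - 1 < N)] at e2
          omega
        · rw [show y.val + (N - 1) = N + (y.val - 1) by omega, Nat.add_mod_left,
            Nat.mod_eq_of_lt (by omega)] at e2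
          omega
      · omega
    refine ⟨X, ?_, ?_, ?_⟩
    · rw [hXdef, Finset.card_image_of_injective _ hinj, hcardX', hcardF]
    · intro x hsub
      have hx : x ∈ X := hsub (by simp)
      have hx1 : x + (l1 : ZMod N) ∈ X := hsub (by simp)
      have hx2 : x - (l1 : ZMod N) ∈ X := by
        have he : x + (l1 : ZMod N) + (l2 : ZMod N) = x - l1 := by
          rw [add_assoc, hneg]; ring
        exact he ▸ hsub (by simp)
      rw [hmemX] at hx hx1 hx2
      apply key (b * x)
      rw [mul_add, hb] at hx1
      rw [mul_sub, hb] at hx2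
      exact ⟨hx2, hx, hx1⟩
    · intro x hsub
      have hx : x ∈ X := hsub (by simp)
      have hx2 : x - (l1 : ZMod N) ∈ X := hsub (by simp)
      have hx1 : x + (l1 : ZMod N) ∈ X := by
        have he : x - (l1 : ZMod N) - (l2 : ZMod N) = x + l1 := by
          have : (l2 : ZMod N) = -(l1 : ZMod N) - l1 := by rw [hl2]; ring
          rw [this]; ring
        exact he ▸ hsub (by simp)
      rw [hmemX] at hx hx1 hx2
      apply key (b * x)
      rw [mul_add, hb] at hx1
      rw [mul_sub, hb] at hx2
      exact ⟨hx2, hx, hx1⟩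
end
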